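/- arXiv:2201.03838 — 7 statements merged into one kernel-verified Lean document; each statement's English description precedes it below -/
import Mathlib

section
/- Let n ≥ 1, let a₁, …, aₙ ∈ ℂ be pairwise distinct, let c₁, …, cₙ ∈ ℂ \ {0}, and let g ∈ ℂ(z) be the derivative of a rational function (i.e. g = (r′s − rs′)/s² for some polynomials r, s ∈ ℂ[z] with s ≠ 0). Set f = g + Σ_{i=1}^{n} cᵢ/(z − aᵢ) ∈ ℂ(z). Then the stabilizer G = {(a, b) ∈ (ℂ \ {0}) × ℂ : σ_{a,b}(f) = f} of f under precomposition by affine transformations is finite of cardinality at most n. -/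
/-!
If `σ(z) = αz + β` fixes `f`, then `σ g - g` is again a derivative, so the simple-fraction
part `∑ cᵢ/(z - aᵢ)` and its image under `σ` differ by a derivative. A derivative of a rational
function has no simple poles (where `r/s` has a pole of order `m`, `(r/s)'` has one of order
`m + 1`), so the residue function `D` of `f` satisfies `D (α x + β) = α D x`. Fixing `x₀` with
`D x₀ ≠ 0`, the pair `(α, β)` is determined by the point `α x₀ + β`, which must be one of the
`n` poles `aᵢ`.
-/

open Polynomial

noncomputable section

variable {K : Type*} [Field K]

def IsRatDeriv (h : RatFunc K) : Prop :=
  ∃ r s : K[X], s ≠ 0 ∧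
    h = algebraMap K[X] (RatFunc K) (derivative r * s - r * derivative s) /
      algebraMap K[X] (RatFunc K) (s ^ 2)

namespace IsRatDeriv

theorem sub {h₁ h₂ : RatFunc K} (H₁ : IsRatDeriv h₁) (H₂ : IsRatDeriv h₂) :
    IsRatDeriv (h₁ - h₂) := by
  obtain ⟨r₁, s₁, hs₁, rfl⟩ := H₁
  obtain ⟨r₂, s₂, hs₂, rfl⟩ := H₂
  refine ⟨r₁ * s₂ - r₂ * s₁, s₁ * s₂, mul_ne_zero hs₁ hs₂, ?_⟩
  have hι {q : K[X]} (hq : q ≠ 0) : algebraMap K[X] (RatFunc K) q ≠ 0 :=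
    RatFunc.algebraMap_ne_zero hq
  rw [div_sub_div _ _ (hι (pow_ne_zero _ hs₁)) (hι (pow_ne_zero _ hs₂)),
    div_eq_div_iff (mul_ne_zero (hι (pow_ne_zero _ hs₁)) (hι (pow_ne_zero _ hs₂)))
      (hι (pow_ne_zero _ (mul_ne_zero hs₁ hs₂)))]
  simp only [← map_mul, ← map_sub, derivative_sub, derivative_mul]
  ring_nf

theorem exists_isCoprime {h : RatFunc K} (H : IsRatDeriv h) :
    ∃ r s : K[X], IsCoprime r s ∧ s ≠ 0 ∧
      h = algebraMap K[X] (RatFunc K) (derivative r * s - r * derivative s) /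
        algebraMap K[X] (RatFunc K) (s ^ 2) := by
  obtain ⟨r, s, hs, rfl⟩ := H
  set φ := algebraMap K[X] (RatFunc K) r / algebraMap K[X] (RatFunc K) s
  refine ⟨φ.num, φ.denom, φ.isCoprime_num_denom, φ.denom_ne_zero, ?_⟩
  have hcross : r * φ.denom = φ.num * s := by
    apply RatFunc.algebraMap_injective K
    rw [map_mul, map_mul, ← div_eq_div_iff (RatFunc.algebraMap_ne_zero hs)
      (RatFunc.algebraMap_ne_zero φ.denom_ne_zero), RatFunc.num_div_denom]
  have hcross' := congrArg derivative hcross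
  simp only [derivative_mul] at hcross'
  rw [div_eq_div_iff (RatFunc.algebraMap_ne_zero (pow_ne_zero 2 hs))
    (RatFunc.algebraMap_ne_zero (pow_ne_zero 2 φ.denom_ne_zero)), ← map_mul, ← map_mul]
  congr 1
  linear_combination (-(derivative s * φ.denom + derivative φ.denom * s)) * hcross
    + (s * φ.denom) * hcross'

end IsRatDeriv

section Affine

variable {σ : RatFunc K →ₐ[K] RatFunc K} {α β : K}

theorem map_algebraMap_of_affine
    (hσ : σ RatFunc.X = RatFunc.C α * RatFunc.X + RatFunc.C β) (q : K[X]) :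
    σ (algebraMap K[X] (RatFunc K) q) =
      algebraMap K[X] (RatFunc K) (q.comp (C α * X + C β)) := by
  rw [← RatFunc.aeval_X_left_eq_algebraMap, ← RatFunc.aeval_X_left_eq_algebraMap,
    ← aeval_algHom_apply, hσ, aeval_comp]
  simp [RatFunc.algebraMap_C]

theorem IsRatDeriv.map_affine (hα : α ≠ 0)
    (hσ : σ RatFunc.X = RatFunc.C α * RatFunc.X + RatFunc.C β) {h : RatFunc K}
    (H : IsRatDeriv h) : IsRatDeriv (σ h) := by
  obtain ⟨r, s, hs, rfl⟩ := H
  set w : K[X] := C α * X + C β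
  have hw : derivative w = C α := by simp [w]
  have hsw : s.comp w ≠ 0 := by
    rw [Ne, comp_eq_zero_iff, not_or]
    refine ⟨hs, fun ⟨_, hc⟩ => hα ?_⟩
    simpa [w] using congrArg (coeff · 1) hc
  refine ⟨C α⁻¹ * r.comp w, s.comp w, hsw, ?_⟩
  rw [map_div₀, map_algebraMap_of_affine hσ, map_algebraMap_of_affine hσ, pow_comp]
  congr 2
  simp only [sub_comp, mul_comp, derivative_mul, derivative_C, derivative_comp, hw]
  have hinv : C α⁻¹ * C α = (1 : K[X]) := by rw [← C_mul, inv_mul_cancel₀ hα, C_1]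
  linear_combination (-((derivative r).comp w * s.comp w
      - r.comp w * (derivative s).comp w)) * hinv

end Affine

def simpleFractions : (K →₀ K) →ₗ[K] RatFunc K :=
  Finsupp.linearCombination K fun x => (RatFunc.X - RatFunc.C x)⁻¹

theorem simpleFractions_single (x c : K) :
    simpleFractions (Finsupp.single x c) = c • (RatFunc.X - RatFunc.C x)⁻¹ :=
  Finsupp.linearCombination_single K c x

theorem map_simpleFractions_of_affine {σ : RatFunc K →ₐ[K] RatFunc K} {α β : K} (hα : α ≠ 0)
    (hσ : σ RatFunc.X = RatFunc.C α * RatFunc.X + RatFunc.C β) (D : K →₀ K) :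
    σ (simpleFractions D) = simpleFractions (α⁻¹ • D.mapDomain fun y => (y - β) / α) := by
  induction D using Finsupp.induction_linear with
  | zero => simp
  | add D₁ D₂ h₁ h₂ => rw [map_add, map_add, h₁, h₂, Finsupp.mapDomain_add, smul_add, map_add]
  | single y c =>
    have hfac : RatFunc.C α * RatFunc.X + RatFunc.C β - RatFunc.C y =
        RatFunc.C α * (RatFunc.X - RatFunc.C ((y - β) / α)) := by
      rw [mul_sub, ← map_mul, mul_div_cancel₀ _ hα, map_sub]
      ring
    rw [simpleFractions_single, Finsupp.mapDomain_single, Finsupp.smul_single,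
      simpleFractions_single, map_smul, map_inv₀, map_sub, hσ, ← RatFunc.algebraMap_eq_C,
      AlgHom.commutes, RatFunc.algebraMap_eq_C, hfac, mul_inv, smul_eq_mul, mul_comm α⁻¹ c,
      mul_smul, ← map_inv₀, ← RatFunc.smul_eq_C_mul]

theorem pow_rootMultiplicity_not_dvd_derivative_mul_sub [CharZero K] {r s : K[X]} {x : K}
    (hs : s ≠ 0) (hsx : s.IsRoot x) (hrx : ¬ r.IsRoot x) :
    ¬ (X - C x) ^ s.rootMultiplicity x ∣ derivative r * s - r * derivative s := by
  intro hdvd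
  set m := s.rootMultiplicity x
  have hm : 0 < m := (rootMultiplicity_pos hs).2 hsx
  have hds : derivative s ≠ 0 := by
    rw [Ne, derivative_eq_zero]
    intro hdeg
    rw [eq_C_of_natDegree_eq_zero hdeg, IsRoot, eval_C] at hsx
    exact hs (by rw [eq_C_of_natDegree_eq_zero hdeg, hsx, C_0])
  have hcop : IsCoprime ((X - C x) ^ m) r :=
    ((irreducible_X_sub_C x).coprime_iff_not_dvd.2 (by rwa [dvd_iff_isRoot])).pow_left
  have hdvd' : (X - C x) ^ m ∣ derivative s := by
    refine hcop.dvd_of_dvd_mul_left ?_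
    simpa using dvd_sub (dvd_mul_of_dvd_right (pow_rootMultiplicity_dvd s x) (derivative r)) hdvd
  have := (le_rootMultiplicity_iff hds).2 hdvd'
  rw [derivative_rootMultiplicity_of_root hsx] at this
  omega

def IsRegularAt (h : RatFunc K) (x : K) : Prop :=
  ∃ N Q : K[X], Q.eval x ≠ 0 ∧
    h = algebraMap K[X] (RatFunc K) N / algebraMap K[X] (RatFunc K) Q

def HasSimplePoleAt (h : RatFunc K) (x : K) : Prop :=
  ∃ c : K, c ≠ 0 ∧ IsRegularAt (h - c • (RatFunc.X - RatFunc.C x)⁻¹) x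

section Local

variable {x : K}

theorem isRegularAt_zero : IsRegularAt (0 : RatFunc K) x :=
  ⟨0, 1, by simp, by simp⟩

theorem IsRegularAt.add {h₁ h₂ : RatFunc K} (H₁ : IsRegularAt h₁ x) (H₂ : IsRegularAt h₂ x) :
    IsRegularAt (h₁ + h₂) x := by
  obtain ⟨N₁, Q₁, hQ₁, rfl⟩ := H₁
  obtain ⟨N₂, Q₂, hQ₂, rfl⟩ := H₂
  refine ⟨N₁ * Q₂ + Q₁ * N₂, Q₁ * Q₂, by simp [hQ₁, hQ₂], ?_⟩
  have hQ {Q : K[X]} (hQ : Q.eval x ≠ 0) : algebraMap K[X] (RatFunc K) Q ≠ 0 :=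
    RatFunc.algebraMap_ne_zero (fun h => hQ (by simp [h]))
  rw [div_add_div _ _ (hQ hQ₁) (hQ hQ₂), map_add, map_mul, map_mul, map_mul]

theorem isRegularAt_smul_inv_X_sub_C {y : K} (hyx : y ≠ x) (c : K) :
    IsRegularAt (c • (RatFunc.X - RatFunc.C y)⁻¹) x :=
  ⟨C c, X - C y, by simpa [sub_eq_zero] using hyx.symm, by
    simp [RatFunc.smul_eq_C_mul, RatFunc.algebraMap_C, div_eq_mul_inv]⟩

theorem isRegularAt_simpleFractions {D : K →₀ K} (hx : D x = 0) :
    IsRegularAt (simpleFractions D) x := by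
  rw [simpleFractions, Finsupp.linearCombination_apply, Finsupp.sum]
  refine Finset.sum_induction _ (IsRegularAt · x) (fun _ _ => IsRegularAt.add) isRegularAt_zero
    fun y hy => isRegularAt_smul_inv_X_sub_C ?_ _
  rintro rfl
  exact Finsupp.mem_support_iff.1 hy hx

theorem hasSimplePoleAt_simpleFractions {D : K →₀ K} (hx : D x ≠ 0) :
    HasSimplePoleAt (simpleFractions D) x := by
  refine ⟨D x, hx, ?_⟩
  have : simpleFractions D - D x • (RatFunc.X - RatFunc.C x)⁻¹ = simpleFractions (D.erase x) := by
    rw [sub_eq_iff_eq_add, ← simpleFractions_single, ← map_add, Finsupp.erase_add_single]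
  rw [this]
  exact isRegularAt_simpleFractions (Finsupp.erase_same)

theorem HasSimplePoleAt.exists_eq_div {h : RatFunc K} (H : HasSimplePoleAt h x) :
    ∃ P Q : K[X], P.eval x ≠ 0 ∧ Q.eval x ≠ 0 ∧
      h = algebraMap K[X] (RatFunc K) P / algebraMap K[X] (RatFunc K) ((X - C x) * Q) := by
  obtain ⟨c, hc, N, Q, hQ, he⟩ := H
  refine ⟨C c * Q + (X - C x) * N, Q, by simp [hc, hQ], hQ, ?_⟩
  have hQ' : algebraMap K[X] (RatFunc K) Q ≠ 0 :=
    RatFunc.algebraMap_ne_zero (fun h => hQ (by simp [h]))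
  have hX : RatFunc.X - RatFunc.C x ≠ 0 := by
    rw [← RatFunc.algebraMap_X, ← RatFunc.algebraMap_C, ← map_sub]
    exact RatFunc.algebraMap_ne_zero (X_sub_C_ne_zero x)
  rw [sub_eq_iff_eq_add] at he
  rw [he, RatFunc.smul_eq_C_mul]
  simp only [map_add, map_mul, map_sub, RatFunc.algebraMap_C, RatFunc.algebraMap_X]
  field_simp
  ring

end Local

theorem IsRatDeriv.not_hasSimplePoleAt [CharZero K] {h : RatFunc K} {x : K}
    (H : IsRatDeriv h) : ¬ HasSimplePoleAt h x := by
  intro hpole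
  obtain ⟨r, s, hrs, hs, rfl⟩ := H.exists_isCoprime
  obtain ⟨P, Q, hP, hQ, he⟩ := hpole.exists_eq_div
  set W := derivative r * s - r * derivative s
  have hQ0 : Q ≠ 0 := fun h => hQ (by simp [h])
  have hP0 : P ≠ 0 := fun h => hP (by simp [h])
  have hcross : W * ((X - C x) * Q) = s ^ 2 * P := by
    apply RatFunc.algebraMap_injective K
    rw [map_mul _ W, map_mul _ (s ^ 2), mul_comm (algebraMap K[X] (RatFunc K) (s ^ 2)),
      ← div_eq_div_iff (RatFunc.algebraMap_ne_zero (pow_ne_zero 2 hs))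
      (RatFunc.algebraMap_ne_zero (mul_ne_zero (X_sub_C_ne_zero x) hQ0)), he]
  by_cases hsx : s.IsRoot x
  · have hrx : ¬ r.IsRoot x := by
      simpa [IsRoot, hsx.eq_zero] using aeval_ne_zero_of_isCoprime hrs x
    have hW : W ≠ 0 := by
      rintro hW
      rw [hW, zero_mul, eq_comm] at hcross
      exact mul_ne_zero (pow_ne_zero 2 hs) hP0 hcross
    -- comparing multiplicities at `x`: `mult W + 1 = 2 mult s`, and `mult s ≥ 1`
    have hmult := congrArg (rootMultiplicity x) hcross
    rw [rootMultiplicity_mul (mul_ne_zero hW (mul_ne_zero (X_sub_C_ne_zero x) hQ0)),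
      rootMultiplicity_mul (mul_ne_zero (X_sub_C_ne_zero x) hQ0), rootMultiplicity_X_sub_C_self,
      rootMultiplicity_eq_zero (show ¬ Q.IsRoot x from hQ), sq,
      rootMultiplicity_mul (mul_ne_zero (mul_ne_zero hs hs) hP0),
      rootMultiplicity_mul (mul_ne_zero hs hs),
      rootMultiplicity_eq_zero (show ¬ P.IsRoot x from hP)]
      at hmult
    have hm : 0 < s.rootMultiplicity x := (rootMultiplicity_pos hs).2 hsx
    refine pow_rootMultiplicity_not_dvd_derivative_mul_sub hs hsx hrx
      ((le_rootMultiplicity_iff hW).1 ?_)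
    omega
  · have := congrArg (eval x) hcross
    simp only [eval_mul, eval_pow, eval_sub, eval_X, eval_C, sub_self, zero_mul, mul_zero] at this
    exact mul_ne_zero (pow_ne_zero 2 hsx) hP this.symm

theorem eq_zero_of_isRatDeriv_simpleFractions [CharZero K] {D : K →₀ K}
    (H : IsRatDeriv (simpleFractions D)) : D = 0 := by
  by_contra hD
  obtain ⟨x, hx⟩ := Finsupp.ne_iff.1 hD
  exact H.not_hasSimplePoleAt (hasSimplePoleAt_simpleFractions hx)

theorem apply_mul_add_eq_mul_apply_of_map_eq [CharZero K] {σ : RatFunc K →ₐ[K] RatFunc K} {α β : K}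
    (hα : α ≠ 0) (hσ : σ RatFunc.X = RatFunc.C α * RatFunc.X + RatFunc.C β)
    {g : RatFunc K} (hg : IsRatDeriv g) {D : K →₀ K}
    (hfix : σ (g + simpleFractions D) = g + simpleFractions D) (x : K) :
    D (α * x + β) = α * D x := by
  set D' := α⁻¹ • D.mapDomain fun y => (y - β) / α
  have hDD' : D = D' := by
    rw [← sub_eq_zero]
    refine eq_zero_of_isRatDeriv_simpleFractions ?_
    rw [map_sub, ← map_simpleFractions_of_affine hα hσ]
    convert (hg.map_affine hα hσ).sub hg using 1
    rw [map_add] at hfix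
    linear_combination -hfix
  have hinj : Function.Injective fun y => (y - β) / α := fun y z hyz => by
    simpa [div_left_inj' hα] using hyz
  have := congrArg (· ((α * x + β - β) / α)) hDD'
  simp only [D', Finsupp.smul_apply, Finsupp.mapDomain_apply hinj, smul_eq_mul] at this
  rw [add_sub_cancel_right, mul_div_cancel_left₀ x hα] at this
  rw [this, mul_inv_cancel_left₀ hα]

def affineStabilizer (D : K →₀ K) : Set (K × K) :=
  {p | p.1 ≠ 0 ∧ ∀ x, D (p.1 * x + p.2) = p.1 * D x}

section Stabilizer

variable {D : K →₀ K} {x₀ : K}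

theorem mapsTo_affineStabilizer_support (hx₀ : D x₀ ≠ 0) :
    Set.MapsTo (fun p : K × K => p.1 * x₀ + p.2) (affineStabilizer D) D.support :=
  fun p ⟨hα, hp⟩ => Finsupp.mem_support_iff.2 (by rw [hp]; exact mul_ne_zero hα hx₀)

theorem injOn_affineStabilizer (hx₀ : D x₀ ≠ 0) :
    Set.InjOn (fun p : K × K => p.1 * x₀ + p.2) (affineStabilizer D) := by
  rintro ⟨α, β⟩ ⟨-, hp⟩ ⟨α', β'⟩ ⟨-, hp'⟩ (he : α * x₀ + β = α' * x₀ + β')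
  have hα : α = α' := mul_right_cancel₀ hx₀ (by rw [← hp, ← hp', he])
  subst hα
  exact Prod.ext rfl (add_left_cancel he)

theorem finite_affineStabilizer (hx₀ : D x₀ ≠ 0) : (affineStabilizer D).Finite :=
  Set.Finite.of_finite_image (D.support.finite_toSet.subset
    (mapsTo_affineStabilizer_support hx₀).image_subset) (injOn_affineStabilizer hx₀)

theorem ncard_affineStabilizer_le (hx₀ : D x₀ ≠ 0) :
    (affineStabilizer D).ncard ≤ D.support.card := by
  rw [← Set.ncard_coe_finset]
  exact Set.ncard_le_ncard_of_injOn _ (mapsTo_affineStabilizer_support hx₀)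
    (injOn_affineStabilizer hx₀)

end Stabilizer

theorem card_support_sum_single_le {ι α M : Type*} [Fintype ι] [AddCommMonoid M]
    (a : ι → α) (c : ι → M) :
    (∑ i, Finsupp.single (a i) (c i)).support.card ≤ Fintype.card ι := by
  classical
  calc _ ≤ (Finset.univ.image a).card :=
        Finset.card_le_card (Finsupp.support_finsetSum.trans
          (Finset.biUnion_subset.2 fun i _ => Finsupp.support_single_subset.trans (by simp)))
    _ ≤ Fintype.card ι := Finset.card_image_le

end

/-- Let `f = g + ∑ cᵢ/(z - aᵢ)` with `g` the derivative of a rational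
function, the `aᵢ` pairwise distinct and all `cᵢ ≠ 0`, `n ≥ 1`. Then the stabilizer of
`f` under precomposition by affine transformations `z ↦ az + b` is finite with at most
`n` elements. -/
theorem stabilizer_card_le_number_of_residues
    (n : ℕ) (hn : 1 ≤ n) (a : Fin n → ℂ) (ha : Function.Injective a)
    (c : Fin n → ℂ) (hc : ∀ i, c i ≠ 0)
    (g : RatFunc ℂ)
    (hg : ∃ r s : Polynomial ℂ, s ≠ 0 ∧
      g = algebraMap (Polynomial ℂ) (RatFunc ℂ)
            (Polynomial.derivative r * s - r * Polynomial.derivative s) /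
          algebraMap (Polynomial ℂ) (RatFunc ℂ) (s ^ 2))
    (f : RatFunc ℂ)
    (hf : f = g + ∑ i : Fin n, RatFunc.C (c i) / (RatFunc.X - RatFunc.C (a i))) :
    {p : ℂ × ℂ | p.1 ≠ 0 ∧ ∃ σ : RatFunc ℂ ≃ₐ[ℂ] RatFunc ℂ,
        σ RatFunc.X = RatFunc.C p.1 * RatFunc.X + RatFunc.C p.2 ∧ σ f = f}.Finite ∧
      {p : ℂ × ℂ | p.1 ≠ 0 ∧ ∃ σ : RatFunc ℂ ≃ₐ[ℂ] RatFunc ℂ,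
        σ RatFunc.X = RatFunc.C p.1 * RatFunc.X + RatFunc.C p.2 ∧ σ f = f}.ncard ≤ n := by
  classical
  set D : ℂ →₀ ℂ := ∑ i, Finsupp.single (a i) (c i)
  have hfD : f = g + simpleFractions D := by
    simp only [hf, D, map_sum, simpleFractions_single, RatFunc.smul_eq_C_mul, div_eq_mul_inv]
  have hD₀ : D (a ⟨0, hn⟩) ≠ 0 := by
    simpa [D, Finsupp.single_apply, ha.eq_iff] using hc ⟨0, hn⟩
  have hsupp : D.support.card ≤ n := (card_support_sum_single_le a c).trans_eq (Fintype.card_fin n)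
  have hsub : {p : ℂ × ℂ | p.1 ≠ 0 ∧ ∃ σ : RatFunc ℂ ≃ₐ[ℂ] RatFunc ℂ,
      σ RatFunc.X = RatFunc.C p.1 * RatFunc.X + RatFunc.C p.2 ∧ σ f = f} ⊆ affineStabilizer D := by
    rintro ⟨α, β⟩ ⟨hα, σ, hσ, hσf⟩
    exact ⟨hα, apply_mul_add_eq_mul_apply_of_map_eq (σ := σ.toAlgHom) hα hσ hg (hfD ▸ hσf)⟩
  exact ⟨(finite_affineStabilizer hD₀).subset hsub, (Set.ncard_le_ncard hsub
    (finite_affineStabilizer hD₀)).trans ((ncard_affineStabilizer_le hD₀).trans hsupp)⟩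
end

section
/- Let n ≥ 2, let a₁, …, aₙ ∈ ℂ be pairwise distinct, let c₁, …, cₙ ∈ ℂ \ {0}, let P ∈ ℂ[z] be a polynomial, and set f = P + Σ_{i=1}^{n} cᵢ/(z − aᵢ) ∈ ℂ(z) (so f has only simple poles and exactly n points with nonzero residue). Assume the stabilizer G = {(a, b) ∈ (ℂ \ {0}) × ℂ : σ_{a,b}(f) = f} has exactly n elements. Then there exist a ∈ ℂ \ {0}, b ∈ ℂ, c ∈ ℂ, a polynomial g ∈ ℂ[z], and a primitive n-th root of unity ξ such that σ_{a,b}(f) = c · Σ_{k=0}^{n−1} ξ^k/(z − ξ^k) + g(zⁿ). -/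
/-!
The expansion `f = Q + ∑_{w ∈ S} r w / (X - w)` with nonzero residues is unique, and the
substitution `X ↦ αX + β` transforms it explicitly: poles `w ↦ (w - β) / α`, residues divided by
`α`, polynomial part `Q(αX + β)`. A translation fixing `f` maps the finite pole set onto itself,
so it preserves the sum of the poles and is trivial. Hence the multipliers `α` of the stabilizer
form a subgroup of `Kˣ` of order `n`; it is cyclic, generated by a primitive `n`-th root of unity
`ξ`. After moving the fixed point of `z ↦ ξ z + β` to `0` and some pole to `1`, invariance under
`X ↦ ξ X` forces the poles to be the `ξᵏ` with residues `ξᵏ · r 1`, and the polynomial part to be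
a polynomial in `Xⁿ`.
-/

open Polynomial

namespace Polynomial

lemma coeff_comp_C_mul_X {R : Type*} [CommSemiring R] (p : R[X]) (s : R) (m : ℕ) :
    (p.comp (C s * X)).coeff m = s ^ m * p.coeff m := by
  induction p using Polynomial.induction_on' with
  | add p q hp hq => simp only [add_comp, coeff_add, hp, hq, mul_add]
  | monomial k a =>
    simp only [← C_mul_X_pow_eq_monomial, mul_comp, C_comp, X_pow_comp, mul_pow, ← C_pow,
      ← mul_assoc, ← C_mul, coeff_C_mul, coeff_X_pow]
    split_ifs with h
    · subst h; ring
    · simp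

lemma expand_contract_of_coeff_eq_zero {R : Type*} [CommSemiring R] {n : ℕ} (hn : n ≠ 0)
    {p : R[X]} (hp : ∀ m, ¬ n ∣ m → p.coeff m = 0) : expand R n (contract n p) = p := by
  ext m
  rw [coeff_expand (Nat.pos_of_ne_zero hn), coeff_contract hn]
  split_ifs with h
  · rw [Nat.div_mul_cancel h]
  · exact (hp m h).symm

end Polynomial

lemma IsPrimitiveRoot.expand_contract_of_comp_C_mul_X_eq {R : Type*} [CommRing R] [IsDomain R]
    {ξ : R} {n : ℕ} (hξ : IsPrimitiveRoot ξ n) (hn : n ≠ 0) {p : R[X]}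
    (hp : p.comp (C ξ * X) = p) : expand R n (contract n p) = p := by
  refine expand_contract_of_coeff_eq_zero hn fun m hm => ?_
  have hcoeff : (ξ ^ m - 1) * p.coeff m = 0 := by
    have h := coeff_comp_C_mul_X p ξ m
    rw [hp] at h
    linear_combination -h
  exact (mul_eq_zero.1 hcoeff).resolve_left (sub_ne_zero.2 (mt (hξ.pow_eq_one_iff_dvd m).1 hm))

namespace RatFunc

variable {K : Type*} [Field K]

lemma X_sub_C_ne_zero (w : K) : (X - C w : RatFunc K) ≠ 0 := by
  rw [← algebraMap_X, ← algebraMap_C, ← map_sub]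
  exact algebraMap_ne_zero (Polynomial.X_sub_C_ne_zero w)

lemma algebraMap_eq_aeval_X (Q : K[X]) : algebraMap K[X] (RatFunc K) Q = aeval X Q := by
  rw [← algebraMap_X, aeval_algebraMap_apply, aeval_X_left_apply]

/-- Clearing denominators by `∏ (X - w)` and evaluating at `w₀` isolates the coefficient of
`1 / (X - w₀)`. -/
lemma eq_zero_of_sum_div_X_sub_C_eq_algebraMap {S : Finset K} {u : K → K} {Q : K[X]}
    (h : ∑ w ∈ S, C (u w) / (X - C w) = algebraMap K[X] (RatFunc K) Q) :
    ∀ w ∈ S, u w = 0 := by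
  classical
  intro w₀ hw₀
  have hpoly : ∑ w ∈ S, Polynomial.C (u w) * ∏ v ∈ S.erase w, (Polynomial.X - Polynomial.C v)
      = Q * ∏ v ∈ S, (Polynomial.X - Polynomial.C v) := by
    apply algebraMap_injective K
    simp only [map_sum, map_mul, map_prod, map_sub, algebraMap_X, algebraMap_C, ← h,
      Finset.sum_mul]
    refine Finset.sum_congr rfl fun w hw => ?_
    rw [← Finset.mul_prod_erase _ _ hw]
    field_simp [X_sub_C_ne_zero w]
  have hev := congrArg (Polynomial.eval w₀) hpoly
  simp only [Polynomial.eval_finsetSum, Polynomial.eval_mul, Polynomial.eval_prod,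
    Polynomial.eval_sub, Polynomial.eval_X, Polynomial.eval_C,
    Finset.prod_eq_zero hw₀ (sub_self w₀), mul_zero] at hev
  rw [Finset.sum_eq_single_of_mem w₀ hw₀ fun w hw hne => mul_eq_zero_of_right _
    (Finset.prod_eq_zero (Finset.mem_erase.2 ⟨hne.symm, hw₀⟩) (sub_self w₀))] at hev
  refine (mul_eq_zero.1 hev).resolve_right ?_
  exact Finset.prod_ne_zero_iff.2 fun v hv => sub_ne_zero.2 (Finset.ne_of_mem_erase hv).symm

structure IsSimplePoleDecomp (f : RatFunc K) (Q : K[X]) (S : Finset K) (r : K → K) : Prop where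
  residue_ne_zero : ∀ w ∈ S, r w ≠ 0
  eq : f = algebraMap K[X] (RatFunc K) Q + ∑ w ∈ S, C (r w) / (X - C w)

namespace IsSimplePoleDecomp

variable {f : RatFunc K} {Q Q' : K[X]} {S T : Finset K} {r t : K → K}

theorem unique (hf : IsSimplePoleDecomp f Q S r) (hf' : IsSimplePoleDecomp f Q' T t) :
    Q = Q' ∧ S = T ∧ ∀ w ∈ S, r w = t w := by
  classical
  set u : K → K := fun w => (if w ∈ S then r w else 0) - (if w ∈ T then t w else 0)
  have hsum : ∑ w ∈ S ∪ T, C (u w) / (X - C w) = algebraMap K[X] (RatFunc K) (Q' - Q) := by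
    simp only [u, map_sub, sub_div, Finset.sum_sub_distrib, apply_ite C, map_zero, ite_div,
      zero_div, Finset.sum_ite_mem, Finset.union_inter_cancel_left,
      Finset.union_inter_cancel_right]
    linear_combination hf.eq.symm.trans hf'.eq
  have hu := eq_zero_of_sum_div_X_sub_C_eq_algebraMap hsum
  have hST : S = T := by
    ext w
    constructor
    · intro hw
      by_contra hwT
      exact hf.residue_ne_zero w hw (by simpa [u, hw, hwT] using hu w (Finset.mem_union_left T hw))
    · intro hw
      by_contra hwS
      exact hf'.residue_ne_zero w hw
        (by simpa [u, hw, hwS] using hu w (Finset.mem_union_right S hw))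
  have hrt : ∀ w ∈ S, r w = t w := fun w hw =>
    sub_eq_zero.1 (by simpa [u, hw, ← hST] using hu w (Finset.mem_union_left T hw))
  refine ⟨algebraMap_injective K (add_right_cancel (b := ∑ w ∈ S, C (r w) / (X - C w)) ?_),
    hST, hrt⟩
  rw [← hf.eq, hf'.eq, ← hST, Finset.sum_congr rfl fun w hw => by rw [← hrt w hw]]

end IsSimplePoleDecomp

section Affine

variable (σ τ : RatFunc K ≃ₐ[K] RatFunc K) {α β γ δ : K}

lemma algEquiv_C (x : K) : σ (C x) = C x := by
  rw [← algebraMap_eq_C, AlgEquiv.commutes]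

lemma algEquiv_algebraMap_of_X (hσ : σ X = C α * X + C β) (Q : K[X]) :
    σ (algebraMap K[X] (RatFunc K) Q) =
      algebraMap K[X] (RatFunc K) (Q.comp (Polynomial.C α * Polynomial.X + Polynomial.C β)) := by
  rw [algebraMap_eq_aeval_X, ← aeval_algHom_apply, hσ, comp_eq_aeval,
    ← aeval_algebraMap_apply]
  simp only [map_add, map_mul, algebraMap_C, algebraMap_X]

lemma algEquiv_C_div_X_sub_C_of_X (hα : α ≠ 0) (hσ : σ X = C α * X + C β) (c w : K) :
    σ (C c / (X - C w)) = C (c / α) / (X - C ((w - β) / α)) := by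
  have hCα : (C α : RatFunc K) ≠ 0 := by simpa using hα
  rw [map_div₀, map_sub, hσ, algEquiv_C, algEquiv_C, map_div₀, map_div₀, map_sub]
  field_simp
  ring

lemma algEquiv_trans_X_of_X (hσ : σ X = C α * X + C β) (hτ : τ X = C γ * X + C δ) :
    (σ.trans τ) X = C (α * γ) * X + C (α * δ + β) := by
  rw [AlgEquiv.trans_apply, hσ, map_add, map_mul, algEquiv_C, algEquiv_C, hτ]
  simp only [map_mul, map_add]
  ring

lemma algEquiv_symm_X_of_X (hα : α ≠ 0) (hσ : σ X = C α * X + C β) :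
    σ.symm X = C α⁻¹ * X + C (-(β / α)) := by
  have hCα : (C α : RatFunc K) ≠ 0 := by simpa using hα
  rw [AlgEquiv.symm_apply_eq, map_add, map_mul, algEquiv_C, algEquiv_C, hσ]
  simp only [map_inv₀, map_neg, map_div₀]
  field_simp
  ring

noncomputable def affineAlgEquiv (α β : K) (hα : α ≠ 0) : RatFunc K ≃ₐ[K] RatFunc K :=
  letI := invertibleOfNonzero hα
  IsFractionRing.algEquivOfAlgEquiv (algEquivCMulXAddC α β)

lemma affineAlgEquiv_X (α β : K) (hα : α ≠ 0) :
    affineAlgEquiv α β hα X = C α * X + C β := by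
  rw [affineAlgEquiv, ← algebraMap_X, IsFractionRing.algEquivOfAlgEquiv_algebraMap]
  simp [algebraMap_C, algebraMap_X]

end Affine

def affineStabilizer (f : RatFunc K) : Set (K × K) :=
  {p | p.1 ≠ 0 ∧ ∃ σ : RatFunc K ≃ₐ[K] RatFunc K, σ X = C p.1 * X + C p.2 ∧ σ f = f}

section Stabilizer

variable {f : RatFunc K} {α β γ δ : K}

lemma one_zero_mem_affineStabilizer (f : RatFunc K) : ((1 : K), (0 : K)) ∈ affineStabilizer f :=
  ⟨one_ne_zero, AlgEquiv.refl, by simp, rfl⟩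

lemma mul_mem_affineStabilizer (h : (α, β) ∈ affineStabilizer f)
    (h' : (γ, δ) ∈ affineStabilizer f) : (α * γ, α * δ + β) ∈ affineStabilizer f := by
  obtain ⟨hα, σ, hσX, hσf⟩ := h
  obtain ⟨hγ, τ, hτX, hτf⟩ := h'
  exact ⟨mul_ne_zero hα hγ, σ.trans τ, algEquiv_trans_X_of_X σ τ hσX hτX,
    by rw [AlgEquiv.trans_apply, hσf, hτf]⟩

lemma inv_mem_affineStabilizer (h : (α, β) ∈ affineStabilizer f) :
    (α⁻¹, -(β / α)) ∈ affineStabilizer f := by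
  obtain ⟨hα, σ, hσX, hσf⟩ := h
  exact ⟨inv_ne_zero hα, σ.symm, algEquiv_symm_X_of_X σ hα hσX, by rw [AlgEquiv.symm_apply_eq, hσf]⟩

lemma mem_affineStabilizer_algEquiv (h : (α, β) ∈ affineStabilizer f)
    (τ : RatFunc K ≃ₐ[K] RatFunc K) (hγ : γ ≠ 0) (hτ : τ X = C γ * X + C δ) :
    (α, (α * δ + β - δ) / γ) ∈ affineStabilizer (τ f) := by
  obtain ⟨hα, σ, hσX, hσf⟩ := h
  refine ⟨hα, τ.symm.trans (σ.trans τ), ?_, by simp [hσf]⟩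
  rw [algEquiv_trans_X_of_X _ _ (algEquiv_symm_X_of_X τ hγ hτ)
    (algEquiv_trans_X_of_X σ τ hσX hτ)]
  congr 3 <;> field_simp
  ring

def affineStabilizerMultipliers (f : RatFunc K) : Subgroup Kˣ where
  carrier := {u | ∃ b, ((u : K), b) ∈ affineStabilizer f}
  one_mem' := ⟨0, one_zero_mem_affineStabilizer f⟩
  mul_mem' := fun ⟨b, hb⟩ ⟨b', hb'⟩ => ⟨_, by simpa using mul_mem_affineStabilizer hb hb'⟩
  inv_mem' := fun ⟨b, hb⟩ => ⟨_, by simpa using inv_mem_affineStabilizer hb⟩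

lemma exists_isPrimitiveRoot_mem_affineStabilizer {n : ℕ} (hn : n ≠ 0)
    (hinj : Set.InjOn Prod.fst (affineStabilizer f)) (hcard : (affineStabilizer f).ncard = n) :
    ∃ ξ β : K, IsPrimitiveRoot ξ n ∧ (ξ, β) ∈ affineStabilizer f := by
  set H := affineStabilizerMultipliers f
  have himage : Units.val '' (H : Set Kˣ) = Prod.fst '' affineStabilizer f := by
    ext x
    constructor
    · rintro ⟨u, ⟨b, hb⟩, rfl⟩
      exact ⟨_, hb, rfl⟩
    · rintro ⟨⟨α, b⟩, hb, rfl⟩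
      exact ⟨Units.mk0 α hb.1, ⟨b, hb⟩, rfl⟩
  have hH : Nat.card H = n := by
    rw [← hcard, ← hinj.ncard_image, ← himage, Set.ncard_image_of_injective _ Units.val_injective]
    exact Nat.card_coe_set_eq (H : Set Kˣ)
  have : Finite H := Nat.finite_of_card_ne_zero (hH ▸ hn)
  obtain ⟨g, hg⟩ := IsCyclic.exists_ofOrder_eq_natCard (α := H)
  obtain ⟨b, hb⟩ := g.2
  refine ⟨_, b, ?_, hb⟩
  rw [IsPrimitiveRoot.coe_units_iff, IsPrimitiveRoot.coe_submonoidClass_iff, ← hH, ← hg]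
  exact IsPrimitiveRoot.orderOf g

end Stabilizer

namespace IsSimplePoleDecomp

variable [DecidableEq K] {f : RatFunc K} {Q : K[X]} {S : Finset K} {r : K → K}

lemma of_injective {ι : Type*} [Fintype ι] {a : ι → K} (ha : Function.Injective a) {c : ι → K}
    (hc : ∀ i, c i ≠ 0) {P : K[X]}
    (hf : f = algebraMap K[X] (RatFunc K) P + ∑ i, C (c i) / (X - C (a i))) :
    IsSimplePoleDecomp f P (Finset.univ.image a) (Function.extend a c 0) := by
  refine ⟨?_, ?_⟩
  · simp only [Finset.mem_image, Finset.mem_univ, true_and, forall_exists_index,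
      forall_apply_eq_imp_iff, ha.extend_apply]
    exact hc
  · rw [hf, Finset.sum_image fun i _ j _ hij => ha hij]
    simp only [ha.extend_apply]

lemma map (hf : IsSimplePoleDecomp f Q S r) (σ : RatFunc K ≃ₐ[K] RatFunc K) {α β : K}
    (hα : α ≠ 0) (hσ : σ X = C α * X + C β) :
    IsSimplePoleDecomp (σ f) (Q.comp (Polynomial.C α * Polynomial.X + Polynomial.C β))
      (S.image fun w => (w - β) / α) (fun v => r (α * v + β) / α) := by
  have hinv : ∀ w, α * ((w - β) / α) + β = w := fun w => by field_simp; ring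
  refine ⟨?_, ?_⟩
  · simp only [Finset.mem_image, forall_exists_index, and_imp, forall_apply_eq_imp_iff₂, hinv]
    exact fun w hw => div_ne_zero (hf.residue_ne_zero w hw) hα
  · rw [hf.eq, map_add, map_sum, algEquiv_algebraMap_of_X σ hσ,
      Finset.sum_image fun w _ v _ h => by simpa [hα, sub_left_inj] using h]
    simp only [algEquiv_C_div_X_sub_C_of_X σ hα hσ, hinv]

theorem eq_of_rotation_mem_affineStabilizer (hf : IsSimplePoleDecomp f Q S r) {ξ : K} {n : ℕ}
    (hξ : IsPrimitiveRoot ξ n) (hn : n ≠ 0) (hS : S.card = n) (h1 : 1 ∈ S)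
    (h : (ξ, 0) ∈ affineStabilizer f) :
    f = C (r 1) * ∑ k ∈ Finset.range n, C (ξ ^ k) / (X - C (ξ ^ k)) +
      aeval (X ^ n) (contract n Q) := by
  obtain ⟨hξ0, σ, hσX, hσf⟩ := h
  have hσ := hf.map σ hξ0 hσX
  rw [hσf] at hσ
  obtain ⟨hQ, hSS, hr⟩ := hσ.unique hf
  simp only [map_zero, add_zero, sub_zero] at hQ hSS hr
  have hmul : ∀ v ∈ S, ξ * v ∈ S ∧ r (ξ * v) = ξ * r v := by
    intro v hv
    rw [← hSS] at hv
    obtain ⟨w, hw, rfl⟩ := Finset.mem_image.1 hv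
    refine ⟨by rwa [mul_div_cancel₀ w hξ0], ?_⟩
    rw [← hr _ (Finset.mem_image_of_mem _ hw)]
    field_simp
  have hpow : ∀ k, ξ ^ k ∈ S ∧ r (ξ ^ k) = ξ ^ k * r 1 := by
    intro k
    induction k with
    | zero => simpa using h1
    | succ k ih =>
      obtain ⟨hk, hrk⟩ := hmul _ ih.1
      rw [pow_succ', hrk, ih.2]
      exact ⟨hk, by ring⟩
  have hinj : Set.InjOn (ξ ^ ·) (Finset.range n : Set ℕ) := fun i hi j hj hij =>
    hξ.pow_inj (Finset.mem_range.1 hi) (Finset.mem_range.1 hj) hij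
  have hSeq : (Finset.range n).image (ξ ^ ·) = S := by
    refine Finset.eq_of_subset_of_card_le (fun w hw => ?_) ?_
    · obtain ⟨k, -, rfl⟩ := Finset.mem_image.1 hw
      exact (hpow k).1
    · rw [Finset.card_image_of_injOn hinj, Finset.card_range, hS]
  rw [hf.eq, ← hSeq, Finset.sum_image hinj, Finset.mul_sum, add_comm]
  congr 1
  · exact Finset.sum_congr rfl fun k _ => by rw [(hpow k).2, map_mul]; ring
  · rw [algebraMap_eq_aeval_X, ← expand_aeval, hξ.expand_contract_of_comp_C_mul_X_eq hn hQ]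

/-- Conjugating by `X ↦ (w₀ - p) X + p`, where `p` is the fixed point of `z ↦ ξ z + β` and `w₀`
is a pole other than `p`, turns that stabilizer element into `X ↦ ξ X` and moves `w₀` to `1`. -/
theorem exists_affineAlgEquiv_eq (hf : IsSimplePoleDecomp f Q S r) {ξ β : K} {n : ℕ}
    (hn : 2 ≤ n) (hξ : IsPrimitiveRoot ξ n) (hS : S.card = n)
    (h : (ξ, β) ∈ affineStabilizer f) :
    ∃ (a₀ : K) (ha₀ : a₀ ≠ 0) (b₀ c₀ : K) (g : K[X]), affineAlgEquiv a₀ b₀ ha₀ f =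
      C c₀ * ∑ k ∈ Finset.range n, C (ξ ^ k) / (X - C (ξ ^ k)) + aeval (X ^ n) g := by
  have hξ1 : 1 - ξ ≠ 0 := sub_ne_zero.2 (hξ.ne_one (by omega)).symm
  set p := β / (1 - ξ)
  have hp : ξ * p + β = p := by simp only [p]; field_simp; ring
  obtain ⟨w₀, hw₀, hw₀p⟩ := Finset.exists_mem_ne (by omega : 1 < S.card) p
  have ha₀ : w₀ - p ≠ 0 := sub_ne_zero.2 hw₀p
  set τ := affineAlgEquiv (w₀ - p) p ha₀
  have hτX := affineAlgEquiv_X (w₀ - p) p ha₀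
  have hmem := mem_affineStabilizer_algEquiv h τ ha₀ hτX
  rw [hp, sub_self, zero_div] at hmem
  refine ⟨w₀ - p, ha₀, p, _, _, (hf.map τ ha₀ hτX).eq_of_rotation_mem_affineStabilizer hξ
    (by omega) ?_ (Finset.mem_image.2 ⟨w₀, hw₀, div_self ha₀⟩) hmem⟩
  rw [Finset.card_image_of_injective _ fun w v h => by simpa [ha₀] using h, hS]

section CharZero

variable [CharZero K]

/-- A translation by `b` permutes the nonempty pole set, so it fixes the sum of the poles,
which forces `#S • b = 0`. -/
lemma eq_zero_of_one_mem_affineStabilizer (hf : IsSimplePoleDecomp f Q S r) (hS : S.Nonempty)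
    {b : K} (h : (1, b) ∈ affineStabilizer f) : b = 0 := by
  obtain ⟨-, σ, hσX, hσf⟩ := h
  have hσ := hf.map σ one_ne_zero hσX
  rw [hσf] at hσ
  obtain ⟨-, hSS, -⟩ := hσ.unique hf
  have hsum := congrArg (fun T => ∑ w ∈ T, w) hSS
  simp only [div_one] at hsum
  rw [Finset.sum_image fun w _ v _ h => sub_left_inj.1 h, Finset.sum_sub_distrib,
    Finset.sum_const, sub_eq_self, smul_eq_zero] at hsum
  exact hsum.resolve_left hS.card_ne_zero

lemma injOn_fst_affineStabilizer (hf : IsSimplePoleDecomp f Q S r) (hS : S.Nonempty) :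
    Set.InjOn Prod.fst (affineStabilizer f) := by
  rintro ⟨α, β⟩ h ⟨α', β'⟩ h' (rfl : α = α')
  have hα : α ≠ 0 := h.1
  have h1 := mul_mem_affineStabilizer (inv_mem_affineStabilizer h) h'
  rw [inv_mul_cancel₀ hα] at h1
  have h2 := hf.eq_zero_of_one_mem_affineStabilizer hS h1
  field_simp at h2
  rw [Prod.mk.injEq]
  exact ⟨rfl, by linear_combination -h2⟩

end CharZero

end IsSimplePoleDecomp

end RatFunc

/-- Let `f = P + ∑ cᵢ/(z - aᵢ)` with `P` a polynomial, the `aᵢ` pairwise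
distinct, all `cᵢ ≠ 0` and `n ≥ 2`. If the stabilizer of `f` under precomposition by
affine transformations has exactly `n` elements, then after an affine change of
variables `f` has the form `c·∑_{k<n} ξᵏ/(z - ξᵏ) + g(zⁿ)` with `ξ` a primitive `n`-th
root of unity and `g` a polynomial. -/
theorem stabilizer_maximal_classification
    (n : ℕ) (hn : 2 ≤ n) (a : Fin n → ℂ) (ha : Function.Injective a)
    (c : Fin n → ℂ) (hc : ∀ i, c i ≠ 0)
    (P : Polynomial ℂ)
    (f : RatFunc ℂ)
    (hf : f = algebraMap (Polynomial ℂ) (RatFunc ℂ) P +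
      ∑ i : Fin n, RatFunc.C (c i) / (RatFunc.X - RatFunc.C (a i)))
    (hstab : {p : ℂ × ℂ | p.1 ≠ 0 ∧ ∃ σ : RatFunc ℂ ≃ₐ[ℂ] RatFunc ℂ,
        σ RatFunc.X = RatFunc.C p.1 * RatFunc.X + RatFunc.C p.2 ∧ σ f = f}.ncard = n) :
    ∃ (a₀ : ℂ) (_ : a₀ ≠ 0) (b₀ c₀ : ℂ) (g : Polynomial ℂ) (ξ : ℂ),
      IsPrimitiveRoot ξ n ∧
      ∃ σ : RatFunc ℂ ≃ₐ[ℂ] RatFunc ℂ,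
        σ RatFunc.X = RatFunc.C a₀ * RatFunc.X + RatFunc.C b₀ ∧
        σ f = RatFunc.C c₀ *
            (∑ k ∈ Finset.range n, RatFunc.C (ξ ^ k) / (RatFunc.X - RatFunc.C (ξ ^ k))) +
          Polynomial.aeval ((RatFunc.X : RatFunc ℂ) ^ n) g := by
  have hdecomp := RatFunc.IsSimplePoleDecomp.of_injective ha hc hf
  have hcard : (Finset.univ.image a).card = n := by
    rw [Finset.card_image_of_injective _ ha, Finset.card_univ, Fintype.card_fin]
  have hinj := hdecomp.injOn_fst_affineStabilizer (Finset.card_pos.1 (by omega))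
  obtain ⟨ξ, β, hξ, hmem⟩ :=
    RatFunc.exists_isPrimitiveRoot_mem_affineStabilizer (by omega) hinj hstab
  obtain ⟨a₀, ha₀, b₀, c₀, g, hg⟩ := hdecomp.exists_affineAlgEquiv_eq hn hξ hcard hmem
  exact ⟨a₀, ha₀, b₀, c₀, g, ξ, hξ, _, RatFunc.affineAlgEquiv_X a₀ b₀ ha₀, hg⟩
end

section
/- Let L be a differential field of characteristic zero containing ℂ, with derivation δ vanishing on ℂ and field of constants exactly ℂ, i.e. {u ∈ L : δu = 0} = ℂ. Let f, g ∈ ℂ(z), and let x, y ∈ L be transcendental over ℂ and satisfy δ(δx) = δx · f(x), δ(δy) = δy · g(y), with δx ≠ 0 and δy ≠ 0. Assume y is algebraic over the subfield ℂ(x) of L and that δx is transcendental over ℂ(x). Then there exist a ∈ ℂ \ {0} and b ∈ ℂ such that y = a·x + b, and moreover f = σ_{a,b}(g) in ℂ(z), i.e. f(z) = g(az + b) as rational functions. -/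
/-!
The derivation `E = (δx)⁻¹ • δ`, i.e. `d/dx`, preserves `ℂ(x)`, hence also its separable
algebraic extension `M = ℂ(x)(y)`, while `δx ∉ M` because `δx` is transcendental over `ℂ(x)`.
The two equations give `δh = h (g(y) - f(x)) ∈ M` for `h = δy / δx = E y ∈ M`. If `E h ≠ 0`
then `δx = δh / E h ∈ M`, which is impossible; so `h` is a nonzero constant `a`. Then
`y = a x + b`, and `g(y) = f(x)` means `f = g(a z + b)` because `x` is transcendental.
-/

open Polynomial IntermediateField

namespace Derivation

section Construction

variable {R L : Type*} [CommRing R] [CommRing L] [Algebra R L]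

def ofLeibniz (δ : L → L) (map_add : ∀ u v, δ (u + v) = δ u + δ v)
    (leibniz : ∀ u v, δ (u * v) = u * δ v + v * δ u)
    (map_algebraMap : ∀ c : R, δ (algebraMap R L c) = 0) : Derivation R L L :=
  mk' { toFun := δ
        map_add' := map_add
        map_smul' := fun c u => by
          rw [Algebra.smul_def, leibniz, map_algebraMap, mul_zero, add_zero, RingHom.id_apply,
            Algebra.smul_def] } leibniz

end Construction

variable {R L : Type*} [CommRing R] [Field L] [Algebra R L] (D : Derivation R L L)

theorem apply_ne_zero_of_transcendental [Nontrivial R]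
    (hconst : ∀ u, D u = 0 → ∃ c, u = algebraMap R L c) {t : L} (ht : Transcendental R t) :
    D t ≠ 0 := fun h0 => by
  obtain ⟨c, rfl⟩ := hconst t h0
  exact ht (isAlgebraic_algebraMap c)

theorem exists_eq_algebraMap_mul_add (hconst : ∀ u, D u = 0 → ∃ c, u = algebraMap R L c)
    {x y : L} {a : R} (h : D y = algebraMap R L a * D x) :
    ∃ b, y = algebraMap R L a * x + algebraMap R L b := by
  obtain ⟨b, hb⟩ := hconst (y - algebraMap R L a * x) (by
    rw [map_sub, leibniz, map_algebraMap, smul_eq_mul, smul_eq_mul, h]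
    ring)
  exact ⟨b, by linear_combination hb⟩

theorem apply_div_apply_eq_mul_sub {x y u v : L} (hx : D x ≠ 0) (hDx : D (D x) = D x * u)
    (hDy : D (D y) = D y * v) : D (D y / D x) = D y / D x * (v - u) := by
  rw [leibniz_div, hDx, hDy, smul_eq_mul, smul_eq_mul, smul_eq_mul]
  field_simp

section Adjoin

variable {K : Type*} [Field K] [Algebra K L] {y : L}

theorem aeval_sub_mem_adjoin_simple (hK : ∀ a : K, D (algebraMap K L a) ∈ K⟮y⟯) (Q : K[X]) :
    D (aeval y Q) - aeval y (derivative Q) * D y ∈ K⟮y⟯ := by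
  induction Q using Polynomial.induction_on with
  | C a => simpa using hK a
  | add p q hp hq =>
    simpa only [map_add, derivative_add, add_mul, add_sub_add_comm] using add_mem hp hq
  | monomial n a ih =>
    convert mul_mem (mem_adjoin_simple_self K y) ih using 1
    simp only [pow_succ, ← mul_assoc, map_mul, aeval_X, derivative_mul, derivative_X, mul_one,
      map_add, leibniz, smul_eq_mul]
    ring

theorem apply_mem_adjoin_simple_of_isSeparable (hK : ∀ a : K, D (algebraMap K L a) ∈ K⟮y⟯)
    (hy : IsSeparable K y) : D y ∈ K⟮y⟯ := by
  have hroot : aeval y (minpoly K y) = 0 := minpoly.aeval K y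
  have hderiv : aeval y (derivative (minpoly K y)) ≠ 0 := hy.aeval_derivative_ne_zero hroot
  have hmem := D.aeval_sub_mem_adjoin_simple hK (minpoly K y)
  rw [hroot, map_zero, zero_sub, neg_mem_iff] at hmem
  rw [← mul_div_cancel_left₀ (D y) hderiv]
  exact div_mem hmem (algebra_adjoin_le_adjoin K _ (aeval_mem_adjoin_singleton K y))

theorem mapsTo_adjoin_simple (hK : ∀ a : K, D (algebraMap K L a) ∈ K⟮y⟯)
    (hy : D y ∈ K⟮y⟯) : Set.MapsTo D K⟮y⟯ K⟮y⟯ := by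
  intro m hm
  induction hm using adjoin_induction with
  | mem m hm => rwa [Set.mem_singleton_iff.mp hm]
  | algebraMap a => exact hK a
  | add u v _ _ hu hv => rw [map_add]; exact add_mem hu hv
  | inv u hu hDu =>
    rw [leibniz_inv, smul_eq_mul]
    exact mul_mem (neg_mem (pow_mem (inv_mem hu) 2)) hDu
  | mul u v hu hv hDu hDv =>
    rw [leibniz, smul_eq_mul, smul_eq_mul]
    exact add_mem (mul_mem hu hDv) (mul_mem hv hDu)

end Adjoin

theorem mapsTo_adjoin_simple_adjoin_simple {F : Type*} [Field F] [Algebra F L]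
    (D : Derivation F L L) {x y : L} (hx : D x ≠ 0) (hy : IsSeparable F⟮x⟯ y) :
    Set.MapsTo ((D x)⁻¹ • D) F⟮x⟯⟮y⟯ F⟮x⟯⟮y⟯ := by
  set E := (D x)⁻¹ • D
  have hE : Set.MapsTo E F⟮x⟯ F⟮x⟯ :=
    E.mapsTo_adjoin_simple (fun c => by simp only [map_algebraMap, zero_mem])
      (by simp [E, hx, one_mem])
  have hK : ∀ a : F⟮x⟯, E (algebraMap F⟮x⟯ L a) ∈ F⟮x⟯⟮y⟯ := fun a =>
    IntermediateField.algebraMap_mem F⟮x⟯⟮y⟯ ⟨E a, hE a.2⟩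
  exact E.mapsTo_adjoin_simple hK (E.apply_mem_adjoin_simple_of_isSeparable hK hy)

theorem apply_eq_zero_of_mem {S : Type*} [SetLike S L] [SubfieldClass S L] {M : S} {t h : L}
    (hM : Set.MapsTo ((D t)⁻¹ • D) M M) (ht : D t ∉ M) (hh : h ∈ M) (hDh : D h ∈ M) :
    D h = 0 := by
  by_contra hne
  have hDt : D t ≠ 0 := fun h0 => ht (h0 ▸ zero_mem M)
  have hE : (D t)⁻¹ * D h ∈ M := hM hh
  refine ht ?_
  rw [show D t = D h / ((D t)⁻¹ * D h) by field_simp]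
  exact div_mem hDh hE

end Derivation

theorem IntermediateField.notMem_adjoin_simple_of_transcendental {K L : Type*} [Field K]
    [Field L] [Algebra K L] {y z : L} (hy : IsAlgebraic K y) (hz : Transcendental K z) :
    z ∉ K⟮y⟯ := fun hmem => by
  have := isAlgebraic_adjoin_simple hy.isIntegral
  exact hz (isAlgebraic_iff.mp (Algebra.IsAlgebraic.isAlgebraic (⟨z, hmem⟩ : K⟮y⟯)))

theorem Transcendental.algebraMap_mul_add {K L : Type*} [Field K] [Field L] [Algebra K L] {t : L}
    (ht : Transcendental K t) {a : K} (ha : a ≠ 0) (b : K) :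
    Transcendental K (algebraMap K L a * t + algebraMap K L b) := by
  have h := ht.aeval (C a * X + C b) (by simp [natDegree_linear ha])
    (by simpa [leadingCoeff_linear ha] using ha)
  rwa [map_add, map_mul, aeval_C, aeval_C, aeval_X] at h

namespace RatFunc

universe u

variable {K L : Type u} [Field K] [Field L] [Algebra K L]

theorem eval_algebraMap_mem {S : IntermediateField K L} {t : L} (ht : t ∈ S) (q : RatFunc K) :
    eval (algebraMap K L) t q ∈ S := by
  have hsub : Algebra.adjoin K {t} ≤ S.toSubalgebra :=
    (algebra_adjoin_le_adjoin K _).trans (adjoin_simple_le_iff.mpr ht)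
  rw [eval, ← aeval_def, ← aeval_def]
  exact div_mem (hsub (aeval_mem_adjoin_singleton K t)) (hsub (aeval_mem_adjoin_singleton K t))

theorem eval_algebraMap_eq_algEquivOfTranscendental {t : L} (ht : Transcendental K t)
    (q : RatFunc K) : eval (algebraMap K L) t q = algEquivOfTranscendental t ht q := by
  rw [algEquivOfTranscendental_apply, eval, aeval_def, aeval_def]

theorem eval_algebraMap_injective {t : L} (ht : Transcendental K t) :
    Function.Injective (eval (algebraMap K L) t) := by
  intro p q hpq
  simp_rw [eval_algebraMap_eq_algEquivOfTranscendental ht] at hpq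
  exact (algEquivOfTranscendental t ht).injective (Subtype.ext hpq)

noncomputable def algEquivCMulXAddC (a b : K) [Invertible a] : RatFunc K ≃ₐ[K] RatFunc K :=
  IsFractionRing.algEquivOfAlgEquiv (Polynomial.algEquivCMulXAddC a b)

theorem algEquivCMulXAddC_X (a b : K) [Invertible a] :
    algEquivCMulXAddC a b X = RatFunc.C a * X + RatFunc.C b := by
  simp [algEquivCMulXAddC, ← algebraMap_X, IsFractionRing.algEquivOfAlgEquiv_algebraMap]

theorem eval_algEquivCMulXAddC {t : L} (ht : Transcendental K t) (a b : K) [Invertible a]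
    (q : RatFunc K) :
    eval (algebraMap K L) t (algEquivCMulXAddC a b q) =
      eval (algebraMap K L) (algebraMap K L a * t + algebraMap K L b) q := by
  have hs := ht.algebraMap_mul_add (Invertible.ne_zero a) b
  let evalAt (s : L) (hs : Transcendental K s) : RatFunc K →ₐ[K] L :=
    (val _).comp (algEquivOfTranscendental s hs).toAlgHom
  have key : (evalAt t ht).comp (algEquivCMulXAddC a b).toAlgHom = evalAt _ hs := by
    apply IsLocalization.algHom_ext (nonZeroDivisors K[X])
    apply Polynomial.algHom_ext
    show evalAt t ht (algEquivCMulXAddC a b X) = evalAt _ hs X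
    rw [algEquivCMulXAddC_X]
    simp [evalAt, ← algebraMap_eq_C]
  rw [eval_algebraMap_eq_algEquivOfTranscendental ht,
    eval_algebraMap_eq_algEquivOfTranscendental hs]
  exact congr($key q)

end RatFunc

theorem algebraic_relations_affine_general
    {L : Type} [Field L] [Algebra ℂ L]
    (δ : L → L)
    (hadd : ∀ u v : L, δ (u + v) = δ u + δ v)
    (hmul : ∀ u v : L, δ (u * v) = u * δ v + v * δ u)
    (hconst : ∀ u : L, δ u = 0 ↔ ∃ c : ℂ, u = algebraMap ℂ L c)
    (f g : RatFunc ℂ) (x y : L)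
    (hxtr : Transcendental ℂ x) (hytr : Transcendental ℂ y)
    (hx : δ (δ x) = δ x * RatFunc.eval (algebraMap ℂ L) x f)
    (hy : δ (δ y) = δ y * RatFunc.eval (algebraMap ℂ L) y g)
    (halg : IsAlgebraic (IntermediateField.adjoin ℂ ({x} : Set L)) y)
    (hdxtr : Transcendental (IntermediateField.adjoin ℂ ({x} : Set L)) (δ x)) :
    ∃ (a b : ℂ), a ≠ 0 ∧ y = algebraMap ℂ L a * x + algebraMap ℂ L b ∧
      ∃ σ : RatFunc ℂ ≃ₐ[ℂ] RatFunc ℂ,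
        σ RatFunc.X = RatFunc.C a * RatFunc.X + RatFunc.C b ∧ f = σ g := by
  set D : Derivation ℂ L L := .ofLeibniz δ hadd hmul fun c => (hconst _).mpr ⟨c, rfl⟩
  set F := RatFunc.eval (algebraMap ℂ L) x f
  set G := RatFunc.eval (algebraMap ℂ L) y g
  have hker : ∀ u, D u = 0 → ∃ c, u = algebraMap ℂ L c := fun u => (hconst u).mp
  have hDx : D x ≠ 0 := D.apply_ne_zero_of_transcendental hker hxtr
  have hDy : D y ≠ 0 := D.apply_ne_zero_of_transcendental hker hytr
  set M := ℂ⟮x⟯⟮y⟯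
  have hM := D.mapsTo_adjoin_simple_adjoin_simple hDx
    (minpoly.irreducible halg.isIntegral).separable
  have hyM : y ∈ M := mem_adjoin_simple_self _ y
  have hxM : x ∈ M := IntermediateField.algebraMap_mem M ⟨x, mem_adjoin_simple_self ℂ x⟩
  have hFM : F ∈ M := RatFunc.eval_algebraMap_mem (S := M.restrictScalars ℂ) hxM f
  have hGM : G ∈ M := RatFunc.eval_algebraMap_mem (S := M.restrictScalars ℂ) hyM g
  have hh : D y / D x ∈ M := by simpa [div_eq_inv_mul] using hM hyM
  have hDh := D.apply_div_apply_eq_mul_sub hDx hx hy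
  have hDh0 : D (D y / D x) = 0 :=
    D.apply_eq_zero_of_mem hM (notMem_adjoin_simple_of_transcendental halg hdxtr) hh
      (hDh ▸ mul_mem hh (sub_mem hGM hFM))
  obtain ⟨a, ha⟩ := hker _ hDh0
  have haz : a ≠ 0 := by rintro rfl; simp [hDx, hDy] at ha
  have hGF : G = F := by
    rw [hDh0, eq_comm, mul_eq_zero, sub_eq_zero] at hDh
    exact hDh.resolve_left (div_ne_zero hDy hDx)
  obtain ⟨b, hyab⟩ := D.exists_eq_algebraMap_mul_add hker (x := x) (by rw [← ha]; field_simp)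
  let := invertibleOfNonzero haz
  refine ⟨a, b, haz, hyab, RatFunc.algEquivCMulXAddC a b, RatFunc.algEquivCMulXAddC_X a b, ?_⟩
  apply RatFunc.eval_algebraMap_injective hxtr
  rw [RatFunc.eval_algEquivCMulXAddC hxtr, ← hyab]
  exact hGF.symm

/-- If `x, y` are solutions (generic over `ℂ`) of the strongly minimal
Poizat equations `δδx = δx·f(x)`, `δδy = δy·g(y)` in a differential field with
constants exactly `ℂ`, and `y` is algebraic over `ℂ(x)`, then `y = ax + b` for some
`a ∈ ℂ*`, `b ∈ ℂ`, and `f(z) = g(az + b)`. -/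
theorem algebraic_relations_affine
    {L : Type} [Field L] [Algebra ℂ L]
    (δ : L → L)
    (hadd : ∀ u v : L, δ (u + v) = δ u + δ v)
    (hmul : ∀ u v : L, δ (u * v) = u * δ v + v * δ u)
    (hδC : ∀ c : ℂ, δ (algebraMap ℂ L c) = 0)
    (hconst : ∀ u : L, δ u = 0 ↔ ∃ c : ℂ, u = algebraMap ℂ L c)
    (f g : RatFunc ℂ) (x y : L)
    (hxtr : Transcendental ℂ x) (hytr : Transcendental ℂ y)
    (hx : δ (δ x) = δ x * RatFunc.eval (algebraMap ℂ L) x f)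
    (hy : δ (δ y) = δ y * RatFunc.eval (algebraMap ℂ L) y g)
    (hx' : δ x ≠ 0) (hy' : δ y ≠ 0)
    (halg : IsAlgebraic (IntermediateField.adjoin ℂ ({x} : Set L)) y)
    (hdxtr : Transcendental (IntermediateField.adjoin ℂ ({x} : Set L)) (δ x)) :
    ∃ (a b : ℂ), a ≠ 0 ∧ y = algebraMap ℂ L a * x + algebraMap ℂ L b ∧
      ∃ σ : RatFunc ℂ ≃ₐ[ℂ] RatFunc ℂ,
        σ RatFunc.X = RatFunc.C a * RatFunc.X + RatFunc.C b ∧ f = σ g :=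
  algebraic_relations_affine_general δ hadd hmul hconst f g x y hxtr hytr hx hy halg hdxtr
end

section
/- Let K ⊆ ℂ be a subfield, let p, q ∈ ℂ[z] be nonzero coprime polynomials with all coefficients in K and with at least one of p, q nonconstant, and let c ∈ ℂ be transcendental over K. Then the polynomial p − c·q ∈ ℂ[z] is squarefree, i.e. it has only simple roots. -/
/-!
If `α` were a multiple root of `p - c q`, then `p(α) = c q(α)` and `p'(α) = c q'(α)`, so `α` is a
root of the Wronskian `p q' - p' q`. For coprime `p, q`, not both constant, the Wronskian is a
nonzero polynomial over `K`, so `α` is algebraic over `K`; coprimality also gives `q(α) ≠ 0`,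
whence `c = p(α) / q(α)` is algebraic over `K`, a contradiction.
-/

open Polynomial

theorem IsAlgebraic.aeval {K A : Type*} [Field K] [Ring A] [Algebra K A] {α : A}
    (hα : IsAlgebraic K α) (f : K[X]) : IsAlgebraic K (aeval α f) :=
  of_not_not fun h ↦ (transcendental_aeval_iff.mp h).1 hα

namespace Polynomial

theorem wronskian_ne_zero_of_isCoprime {R : Type*} [CommRing R] [NoZeroDivisors R]
    [IsAddTorsionFree R] {p q : R[X]} (hcop : IsCoprime p q)
    (hdeg : 1 ≤ p.natDegree ∨ 1 ≤ q.natDegree) : wronskian p q ≠ 0 := by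
  rw [Ne, hcop.wronskian_eq_zero_iff, derivative_eq_zero, derivative_eq_zero]
  omega

theorem isRoot_wronskian_of_isRoot_sub_C_mul {R : Type*} [CommRing R]
    {p q : R[X]} {c α : R} (h : (p - C c * q).IsRoot α)
    (h' : (derivative (p - C c * q)).IsRoot α) : (wronskian p q).IsRoot α := by
  simp only [IsRoot, wronskian, derivative_sub, derivative_C_mul, eval_sub, eval_mul,
    eval_C] at h h' ⊢
  linear_combination eval α (derivative q) * h - eval α q * h'

theorem map_wronskian {R S : Type*} [CommRing R] [CommRing S] (f : R →+* S) (p q : R[X]) :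
    (wronskian p q).map f = wronskian (p.map f) (q.map f) := by
  simp only [wronskian, Polynomial.map_sub, Polynomial.map_mul, derivative_map]

variable {K L : Type*} [Field K] [Field L] [Algebra K L]

theorem isAlgebraic_of_isRoot_map_sub_C_mul_map {P Q : K[X]} (hcop : IsCoprime P Q)
    {c α : L} (hα : IsAlgebraic K α)
    (h : (P.map (algebraMap K L) - C c * Q.map (algebraMap K L)).IsRoot α) :
    IsAlgebraic K c := by
  have hPα : aeval α P = aeval α Q * c := by
    simp only [IsRoot, eval_sub, eval_mul, eval_C, eval_map_algebraMap] at h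
    linear_combination h
  have hQα : aeval α Q ≠ 0 := fun h0 ↦ by
    simpa [hPα, h0] using aeval_ne_zero_of_isCoprime hcop α
  exact (hα.aeval Q).of_mul (mem_nonZeroDivisors_of_ne_zero hQα) (hPα ▸ hα.aeval P)

theorem separable_map_sub_C_mul_map [IsAddTorsionFree K] [IsAlgClosed L] {P Q : K[X]}
    (hcop : IsCoprime P Q) (hdeg : 1 ≤ P.natDegree ∨ 1 ≤ Q.natDegree) {c : L}
    (hc : Transcendental K c) :
    (P.map (algebraMap K L) - C c * Q.map (algebraMap K L)).Separable := by
  rw [Separable, isCoprime_iff_aeval_ne_zero_of_isAlgClosed (k := L) L]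
  intro α
  by_contra! ⟨h, h'⟩
  have hW : aeval α (wronskian P Q) = 0 := by
    rw [← eval_map_algebraMap, map_wronskian]
    exact isRoot_wronskian_of_isRoot_sub_C_mul h h'
  have hα : IsAlgebraic K α := ⟨wronskian P Q, wronskian_ne_zero_of_isCoprime hcop hdeg, hW⟩
  exact hc (isAlgebraic_of_isRoot_map_sub_C_mul_map hcop hα h)

end Polynomial

theorem Subfield.exists_map_eq_of_forall_coeff_mem {L : Type*} [Field L] {K : Subfield L}
    {p : L[X]} (hp : ∀ i, p.coeff i ∈ K) : ∃ P : K[X], P.map (algebraMap K L) = p :=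
  (mem_lifts p).mp <| (lifts_iff_coeff_lifts p).mpr fun n ↦ ⟨⟨p.coeff n, hp n⟩, rfl⟩

theorem generic_translate_squarefree_general
    (K : Subfield ℂ) (p q : Polynomial ℂ)
    (hcop : IsCoprime p q)
    (hpK : ∀ i, p.coeff i ∈ K) (hqK : ∀ i, q.coeff i ∈ K)
    (hdeg : 1 ≤ p.natDegree ∨ 1 ≤ q.natDegree)
    (c : ℂ) (hc : Transcendental K c) :
    Squarefree (p - Polynomial.C c * q) := by
  obtain ⟨P, rfl⟩ := Subfield.exists_map_eq_of_forall_coeff_mem hpK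
  obtain ⟨Q, rfl⟩ := Subfield.exists_map_eq_of_forall_coeff_mem hqK
  rw [isCoprime_map] at hcop
  rw [natDegree_map, natDegree_map] at hdeg
  exact (separable_map_sub_C_mul_map hcop hdeg hc).squarefree

/-- If `p, q ∈ ℂ[z]` are nonzero coprime polynomials with coefficients in
a subfield `K ⊆ ℂ`, at least one of them nonconstant, and `c ∈ ℂ` is transcendental
over `K`, then `p - c·q` is squarefree (has only simple roots). -/
theorem generic_translate_squarefree
    (K : Subfield ℂ) (p q : Polynomial ℂ)
    (hp : p ≠ 0) (hq : q ≠ 0) (hcop : IsCoprime p q)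
    (hpK : ∀ i, p.coeff i ∈ K) (hqK : ∀ i, q.coeff i ∈ K)
    (hdeg : 1 ≤ p.natDegree ∨ 1 ≤ q.natDegree)
    (c : ℂ) (hc : Transcendental K c) :
    Squarefree (p - Polynomial.C c * q) :=
  generic_translate_squarefree_general K p q hcop hpK hqK hdeg c hc
end

section
/- Let L be a differential field of characteristic zero with derivation δ, and let z ∈ L satisfy δ(δz) = z · δz. Then the element c := z² − 2·δz satisfies δc = 0. Moreover, if s ∈ L satisfies s² = z² − 2·δz and δs = 0 and z + s ≠ 0, then the element z₀ := (z − s)/(z + s) satisfies δz₀ = s · z₀ (so that δz₀/z₀ = s whenever z₀ ≠ 0). -/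
def Derivation.ofAddLeibniz {A : Type*} [CommRing A] (δ : A → A)
    (hadd : ∀ a b : A, δ (a + b) = δ a + δ b)
    (hmul : ∀ a b : A, δ (a * b) = a * δ b + b * δ a) : Derivation ℤ A A :=
  Derivation.mk' (AddMonoidHom.mk' δ hadd).toIntLinearMap hmul

namespace Derivation

variable {R : Type*} [CommRing R]

theorem poizat_invariant_eq_zero {A : Type*} [CommRing A] [Algebra R A] (D : Derivation R A A)
    {z : A} (hz : D (D z) = z * D z) : D (z ^ 2 - 2 * D z) = 0 := by
  have hD2 : D (2 : A) = 0 := by exact_mod_cast D.map_natCast 2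
  rw [D.map_sub, D.leibniz_pow, D.leibniz, hD2, hz]
  simp only [smul_eq_mul]
  ring

/-- The quotient rule gives `2 s D z / (z + s) ^ 2`, and `2 D z = (z - s) (z + s)`. -/
theorem apply_sub_div_add_of_sq_eq {K : Type*} [Field K] [Algebra R K] (D : Derivation R K K)
    {z s : K} (hs : s ^ 2 = z ^ 2 - 2 * D z) (hDs : D s = 0) (hzs : z + s ≠ 0) :
    D ((z - s) / (z + s)) = s * ((z - s) / (z + s)) := by
  rw [D.leibniz_div, D.map_sub, D.map_add, hDs]
  simp only [smul_eq_mul, sub_zero, add_zero]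
  field_simp
  linear_combination s * hs

end Derivation

theorem poizat_two_step_analysis_general
    {L : Type*} [Field L]
    (δ : L → L)
    (hadd : ∀ a b : L, δ (a + b) = δ a + δ b)
    (hmul : ∀ a b : L, δ (a * b) = a * δ b + b * δ a)
    (z : L) (hz : δ (δ z) = z * δ z) :
    δ (z ^ 2 - 2 * δ z) = 0 ∧
    ∀ s : L, s ^ 2 = z ^ 2 - 2 * δ z → δ s = 0 → z + s ≠ 0 →
      δ ((z - s) / (z + s)) = s * ((z - s) / (z + s)) :=
  let D := Derivation.ofAddLeibniz δ hadd hmul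
  ⟨D.poizat_invariant_eq_zero hz, fun _ hs hDs hzs => D.apply_sub_div_add_of_sq_eq hs hDs hzs⟩

/-- For a solution `z` of the Poizat equation `δδz = z·δz` in a
differential field of characteristic zero, `c = z² - 2δz` is a constant; and if
`s² = z² - 2δz` with `δs = 0` and `z + s ≠ 0`, then `z₀ = (z - s)/(z + s)` satisfies
`δz₀ = s·z₀`. -/
theorem poizat_two_step_analysis
    {L : Type*} [Field L] [CharZero L]
    (δ : L → L)
    (hadd : ∀ a b : L, δ (a + b) = δ a + δ b)
    (hmul : ∀ a b : L, δ (a * b) = a * δ b + b * δ a)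
    (z : L) (hz : δ (δ z) = z * δ z) :
    δ (z ^ 2 - 2 * δ z) = 0 ∧
    ∀ s : L, s ^ 2 = z ^ 2 - 2 * δ z → δ s = 0 → z + s ≠ 0 →
      δ ((z - s) / (z + s)) = s * ((z - s) / (z + s)) :=
  poizat_two_step_analysis_general δ hadd hmul z hz
end

section
/- Let P ∈ ℂ[z] be a polynomial of degree 3, let K ⊆ ℂ be a subfield containing all coefficients of P, and let c ∈ ℂ be transcendental over K. Then there do not exist e ∈ ℂ and nonzero polynomials r, s ∈ ℂ[z] such that, in ℂ(z), r·s = e·(P + c)·(r′s − rs′); equivalently, 1/(P(z) + c) is not a constant multiple of the logarithmic derivative u′/u of any nonzero rational function u = r/s ∈ ℂ(z). (Hence there is no degree-3 polynomial P such that 1/(P + c) is a constant multiple of a logarithmic derivative for generic values of c.) -/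
/-!
At a root `β` of `Q = P + c`, comparing residues in `r'/r - s'/s = 1/(e Q)` gives
`e Q'(β) n_β = 1` with `n_β = ord_β r - ord_β s ∈ ℤ`. As `∑ 1/Q'(β) = 0` over the three roots, the
nonzero integers `n_β` sum to zero, so `σ₂(n) ≠ 0`, and eliminating `e` makes `∏ Q'(β)` a rational
multiple of `(∑ Q'(β))³ ∈ K`. But `∏ Q'(β) = -disc Q / lc Q`, and the discriminant of `P + c` is a
quadratic polynomial in `c` over `K` with leading coefficient `-27 lc(P)²`, contradicting the
transcendence of `c`.
-/

open Polynomial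

theorem X_sub_C_mul_derivative_pow_mul {R : Type*} [CommRing R] (β : R) (a : ℕ) (p : R[X]) :
    (X - C β) * derivative ((X - C β) ^ a * p) =
      (X - C β) ^ a * (C (a : R) * p + (X - C β) * derivative p) := by
  rw [derivative_mul, derivative_X_sub_C_pow]
  cases a with
  | zero => simp
  | succ n => simp only [Nat.add_sub_cancel, pow_succ]; ring

theorem mul_eval_derivative_mul_rootMultiplicity_sub_eq_one {R : Type*} [CommRing R] [IsDomain R]
    {Q r s : R[X]} {e β : R} (hr : r ≠ 0) (hs : s ≠ 0) (hQ : Q.IsRoot β)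
    (h : r * s = C e * Q * (derivative r * s - r * derivative s)) :
    e * (derivative Q).eval β *
      (((r.rootMultiplicity β : ℤ) - s.rootMultiplicity β : ℤ) : R) = 1 := by
  obtain ⟨r₁, hr₁, hr₁β⟩ := r.exists_eq_pow_rootMultiplicity_mul_and_not_dvd hr β
  obtain ⟨s₁, hs₁, hs₁β⟩ := s.exists_eq_pow_rootMultiplicity_mul_and_not_dvd hs β
  rw [dvd_iff_isRoot] at hr₁β hs₁β
  set a := r.rootMultiplicity β
  set b := s.rootMultiplicity β
  have hdr := X_sub_C_mul_derivative_pow_mul β a r₁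
  have hds := X_sub_C_mul_derivative_pow_mul β b s₁
  set v : R[X] := X - C β
  set Q₁ := Q /ₘ v
  have hQ₁ : v * Q₁ = Q := mul_divByMonic_eq_iff_isRoot.mpr hQ
  -- `r'/r - s'/s = 1/(e Q)` has residue `a - b` at `β`; clearing `v ^ (a + b + 1)` exposes it
  have hcancel : v ^ (a + b + 1) * (r₁ * s₁) = v ^ (a + b + 1) * (C e * Q₁ *
      ((C (a : R) - C (b : R)) * (r₁ * s₁) + v * (derivative r₁ * s₁ - r₁ * derivative s₁))) := by
    rw [hr₁, hs₁, ← hQ₁] at h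
    linear_combination v * h + C e * v * Q₁ * (v ^ b * s₁) * hdr
      - C e * v * Q₁ * (v ^ a * r₁) * hds
  have hv : v ^ (a + b + 1) ≠ 0 := pow_ne_zero _ (X_sub_C_ne_zero β)
  have hβ := congrArg (eval β) (mul_left_cancel₀ hv hcancel)
  have hQ'β : (derivative Q).eval β = Q₁.eval β := by
    rw [← hQ₁]; simp [v]
  simp only [eval_mul, eval_add, eval_sub, eval_C, v, eval_X, sub_self, zero_mul, add_zero] at hβ
  push_cast
  rw [hQ'β]
  apply mul_left_cancel₀ (mul_ne_zero hr₁β hs₁β)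
  linear_combination -hβ

theorem mul_mul_eq_add_add_pow_three_mul_ratCast {F : Type*} [Field F] [CharZero F]
    {A B C e : F} {n₁ n₂ n₃ : ℤ} (hA : e * A * n₁ = 1) (hB : e * B * n₂ = 1)
    (hC : e * C * n₃ = 1) (hABC : A * B + B * C + C * A = 0) :
    A * B * C = (A + B + C) ^ 3 *
      (((n₁ * n₂ * n₃) ^ 2 / (n₁ * n₂ + n₂ * n₃ + n₃ * n₁) ^ 3 : ℚ) : F) := by
  have hn₁ : (n₁ : F) ≠ 0 := by rintro h; simp [h] at hA
  have hsum : n₁ + n₂ + n₃ = 0 := by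
    have : (n₁ + n₂ + n₃ : F) = e ^ 2 * n₁ * n₂ * n₃ * (A * B + B * C + C * A) := by
      linear_combination (-(n₃ : F) * (e * B * n₂) - n₂) * hA
        + (-(n₃ : F) - n₁ * (e * C * n₃)) * hB + (-(n₁ : F) - n₂ * (e * A * n₁)) * hC
    rw [hABC, mul_zero] at this
    exact_mod_cast this
  -- `n₁ n₂ + n₂ n₃ + n₃ n₁ = -(n₁² + n₂² + n₃²) / 2` once the `nᵢ` sum to zero
  have hσ : n₁ * n₂ + n₂ * n₃ + n₃ * n₁ ≠ 0 := by
    have : 0 < n₁ ^ 2 := by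
      have : n₁ ≠ 0 := by rintro rfl; simp at hn₁
      positivity
    nlinarith [sq_nonneg n₂, sq_nonneg n₃]
  have hσF : (n₁ * n₂ + n₂ * n₃ + n₃ * n₁ : F) ≠ 0 := by exact_mod_cast hσ
  have hS : (A + B + C) * (e * (n₁ * n₂ * n₃)) = n₁ * n₂ + n₂ * n₃ + n₃ * n₁ := by
    linear_combination (n₂ * n₃ : F) * hA + (n₃ * n₁ : F) * hB + (n₁ * n₂ : F) * hC
  have hprod : A * B * C * (e ^ 3 * (n₁ * n₂ * n₃)) = 1 := by
    linear_combination (e * B * n₂ * (e * C * n₃)) * hA + (e * C * n₃) * hB + hC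
  push_cast
  rw [mul_div_assoc', eq_div_iff (pow_ne_zero 3 hσF)]
  set σ : F := n₁ * n₂ + n₂ * n₃ + n₃ * n₁
  set N : F := n₁ * n₂ * n₃
  set S := A + B + C
  linear_combination
    S ^ 3 * N ^ 2 * hprod - A * B * C * (σ ^ 2 + σ * (S * e * N) + (S * e * N) ^ 2) * hS

theorem Cubic.map_id {R : Type*} [Semiring R] (P : Cubic R) : P.map (RingHom.id R) = P := rfl

theorem Cubic.toPoly_mk_coeff {R : Type*} [Semiring R] {p : R[X]} (hp : p.natDegree ≤ 3) :
    (⟨p.coeff 3, p.coeff 2, p.coeff 1, p.coeff 0⟩ : Cubic R).toPoly = p := by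
  ext n
  rcases n with _ | _ | _ | _ | n
  · exact Cubic.coeff_eq_d
  · exact Cubic.coeff_eq_c
  · exact Cubic.coeff_eq_b
  · exact Cubic.coeff_eq_a
  · rw [Cubic.coeff_eq_zero (by omega), coeff_eq_zero_of_natDegree_lt (by omega)]

section Cubic

variable {F : Type*} [Field F] {P : Cubic F} {x y z : F}

theorem Cubic.eval_derivative_of_roots_eq (ha : P.a ≠ 0) (h3 : P.roots = {x, y, z}) :
    (derivative P.toPoly).eval x = P.a * ((x - y) * (x - z)) ∧
      (derivative P.toPoly).eval y = P.a * ((y - x) * (y - z)) ∧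
      (derivative P.toPoly).eval z = P.a * ((z - x) * (z - y)) := by
  have hfac := Cubic.eq_prod_three_roots (φ := RingHom.id F) ha h3
  rw [Cubic.map_id, RingHom.id_apply] at hfac
  simp only [hfac, derivative_mul, derivative_C, derivative_X_sub_C, eval_add, eval_mul, eval_sub,
    eval_C, eval_X, eval_zero, eval_one, sub_self]
  refine ⟨?_, ?_, ?_⟩ <;> ring

theorem Cubic.eval_derivative_mul_add_mul_add_mul_of_roots_eq (ha : P.a ≠ 0)
    (h3 : P.roots = {x, y, z}) :
    (derivative P.toPoly).eval x * (derivative P.toPoly).eval y +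
      (derivative P.toPoly).eval y * (derivative P.toPoly).eval z +
      (derivative P.toPoly).eval z * (derivative P.toPoly).eval x = 0 := by
  obtain ⟨hx, hy, hz⟩ := Cubic.eval_derivative_of_roots_eq ha h3
  rw [hx, hy, hz]
  ring

theorem Cubic.eval_derivative_add_of_roots_eq (ha : P.a ≠ 0) (h3 : P.roots = {x, y, z}) :
    (derivative P.toPoly).eval x + (derivative P.toPoly).eval y + (derivative P.toPoly).eval z =
      (P.b ^ 2 - 3 * P.a * P.c) / P.a := by
  obtain ⟨hx, hy, hz⟩ := Cubic.eval_derivative_of_roots_eq ha h3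
  have hb := Cubic.b_eq_three_roots (φ := RingHom.id F) ha h3
  have hc := Cubic.c_eq_three_roots (φ := RingHom.id F) ha h3
  simp only [RingHom.id_apply] at hb hc
  rw [hx, hy, hz, eq_div_iff ha, hb, hc]
  ring

theorem Cubic.discr_eq_neg_mul_eval_derivative_mul_of_roots_eq (ha : P.a ≠ 0)
    (h3 : P.roots = {x, y, z}) :
    P.discr = -(P.a * ((derivative P.toPoly).eval x * (derivative P.toPoly).eval y *
      (derivative P.toPoly).eval z)) := by
  obtain ⟨hx, hy, hz⟩ := Cubic.eval_derivative_of_roots_eq ha h3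
  have := Cubic.discr_eq_prod_three_roots (φ := RingHom.id F) ha h3
  simp only [RingHom.id_apply] at this
  rw [this, hx, hy, hz]
  ring

theorem Cubic.discr_mem_of_mul_eq_C_mul_toPoly_mul [CharZero F] {K : Subfield F}
    (ha : P.a ≠ 0) (haK : P.a ∈ K) (hbK : P.b ∈ K) (hcK : P.c ∈ K) (h3 : P.roots = {x, y, z})
    {e : F} {r s : F[X]} (hr : r ≠ 0) (hs : s ≠ 0)
    (h : r * s = C e * P.toPoly * (derivative r * s - r * derivative s)) :
    P.discr ∈ K := by
  have residue (β : F) (hβ : β ∈ ({x, y, z} : Multiset F)) :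
      ∃ n : ℤ, e * (derivative P.toPoly).eval β * n = 1 :=
    ⟨_, mul_eval_derivative_mul_rootMultiplicity_sub_eq_one hr hs
      (isRoot_of_mem_roots (by rwa [← h3] at hβ)) h⟩
  obtain ⟨n₁, h₁⟩ := residue x (by simp)
  obtain ⟨n₂, h₂⟩ := residue y (by simp)
  obtain ⟨n₃, h₃⟩ := residue z (by simp)
  have hprod := mul_mul_eq_add_add_pow_three_mul_ratCast h₁ h₂ h₃
    (Cubic.eval_derivative_mul_add_mul_add_mul_of_roots_eq ha h3)
  rw [Cubic.eval_derivative_add_of_roots_eq ha h3] at hprod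
  have hsum : (P.b ^ 2 - 3 * P.a * P.c) / P.a ∈ K :=
    div_mem (sub_mem (pow_mem hbK 2) (mul_mem (mul_mem (ofNat_mem K 3) haK) hcK)) haK
  rw [Cubic.discr_eq_neg_mul_eval_derivative_mul_of_roots_eq ha h3, hprod]
  exact neg_mem (mul_mem haK (mul_mem (pow_mem hsum 3) (SubfieldClass.ratCast_mem K _)))

end Cubic

theorem Transcendental.add_of_mem {L : Type*} [Field L] {K : Subfield L} {t x : L}
    (ht : Transcendental K t) (hx : x ∈ K) : Transcendental K (x + t) := by
  have := ht.aeval (X + C ⟨x, hx⟩) (by rw [natDegree_X_add_C]; exact one_ne_zero)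
    (by rw [leadingCoeff_X_add_C]; exact one_mem _)
  rwa [map_add, aeval_X, aeval_C, Algebra.algebraMap_ofSubsemiring_apply, add_comm] at this

theorem Cubic.transcendental_discr {L : Type*} [Field L] [CharZero L] {K : Subfield L}
    {P : Cubic L} (ha : P.a ∈ K) (hb : P.b ∈ K) (hc : P.c ∈ K) (ha₀ : P.a ≠ 0)
    (hd : Transcendental K P.d) : Transcendental K P.discr := by
  set a : K := ⟨P.a, ha⟩
  set b : K := ⟨P.b, hb⟩
  set c : K := ⟨P.c, hc⟩
  have ha' : -27 * a ^ 2 ≠ 0 := by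
    have ha₁ : a ≠ 0 := fun h ↦ ha₀ (congrArg Subtype.val h)
    have h27 : (27 : K) ≠ 0 := by exact_mod_cast (by norm_num : (27 : ℕ) ≠ 0)
    exact mul_ne_zero (neg_ne_zero.mpr h27) (pow_ne_zero 2 ha₁)
  have key : P.discr = aeval P.d (C (-27 * a ^ 2) * X ^ 2 + C (18 * a * b * c - 4 * b ^ 3) * X
      + C (b ^ 2 * c ^ 2 - 4 * a * c ^ 3)) := by
    simp only [map_add, map_mul, map_sub, map_pow, map_neg, map_ofNat, aeval_X, aeval_C,
      Algebra.algebraMap_ofSubsemiring_apply, Cubic.discr, a, b, c]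
    ring
  rw [key]
  exact hd.aeval _ (by rw [natDegree_quadratic ha']; norm_num)
    (by rw [leadingCoeff_quadratic ha']; exact mem_nonZeroDivisors_of_ne_zero ha')

/-- For `P ∈ ℂ[z]` of degree 3 with coefficients in a subfield `K ⊆ ℂ`
and `c ∈ ℂ` transcendental over `K`, `1/(P + c)` is not a constant multiple of a
logarithmic derivative: there are no `e ∈ ℂ` and nonzero `r, s ∈ ℂ[z]` with
`r·s = e·(P + c)·(r′s - rs′)`. -/
theorem degree_three_not_log_derivative
    (P : Polynomial ℂ) (hP : P.natDegree = 3)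
    (K : Subfield ℂ) (hPK : ∀ i, P.coeff i ∈ K)
    (c : ℂ) (hc : Transcendental K c) :
    ¬ ∃ (e : ℂ) (r s : Polynomial ℂ), r ≠ 0 ∧ s ≠ 0 ∧
      r * s = Polynomial.C e * (P + Polynomial.C c) *
        (Polynomial.derivative r * s - r * Polynomial.derivative s) := by
  rintro ⟨e, r, s, hr, hs, h⟩
  set Q : Cubic ℂ := ⟨P.coeff 3, P.coeff 2, P.coeff 1, P.coeff 0 + c⟩
  have hQ : Q.toPoly = P + C c := by
    conv_rhs => rw [← Cubic.toPoly_mk_coeff hP.le]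
    simp only [Cubic.toPoly, Q, C_add]
    ring
  have ha : Q.a ≠ 0 := by
    have : P ≠ 0 := by rintro rfl; simp at hP
    change P.coeff 3 ≠ 0
    rwa [← hP, coeff_natDegree, leadingCoeff_ne_zero]
  obtain ⟨x, y, z, h3⟩ := (Cubic.splits_iff_roots_eq_three (φ := RingHom.id ℂ) ha).mp
    (IsAlgClosed.splits _)
  rw [Cubic.map_id] at h3
  rw [← hQ] at h
  have hdiscr := Cubic.discr_mem_of_mul_eq_C_mul_toPoly_mul ha (hPK 3) (hPK 2) (hPK 1) h3 hr hs h
  exact Cubic.transcendental_discr (hPK 3) (hPK 2) (hPK 1) ha (hc.add_of_mem (hPK 0))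
    (isAlgebraic_algebraMap (⟨_, hdiscr⟩ : K))
end

section
/- Let a, b ∈ ℂ and P(z) = z³ + a z² + b z ∈ ℂ[z]. Let A₁, A₂, A₃ ∈ ℂ \ {0} with A₁A₂A₃ = 1. Suppose there are infinitely many c ∈ ℂ for which there exist e ∈ ℂ and pairwise distinct α₁, α₂, α₃ ∈ ℂ such that, in ℂ(z), 1/(P(z) + c) = e · (A₁/(z − α₁) + A₂/(z − α₂) + A₃/(z − α₃)). Then A₁ + A₂ + A₃ = 0 and A₁A₂ + A₁A₃ + A₂A₃ = 0; equivalently, {A₁, A₂, A₃} is exactly the set of the three cube roots of unity. -/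
/-!
Clearing denominators, `(z - α₁)(z - α₂)(z - α₃) = e (P + c) N` with `deg N ≤ 2`; comparing
degrees and leading coefficients gives `e N = 1`, so the `αᵢ` are the roots of `P + c`, and
`∑ Aᵢ = ∑ Aᵢ αᵢ = 0`. Thus every root triple `α` lies on the line `∑ xᵢ = -a`, `∑ Aᵢ xᵢ = 0`
and on the sphere `∑ xᵢ² = a² - 2b`, and distinct `c = -α₁α₂α₃` give distinct triples.
A line meets a sphere in at most two points unless its direction `w = A × (1, 1, 1)` is
isotropic, and `w · w = 3 ∑ Aᵢ² - (∑ Aᵢ)²`; hence `∑ Aᵢ² = 0`.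
-/

section PartialFractions

open Polynomial

variable {K : Type*} [Field K]

theorem prod_X_sub_C_eq_mul_of_one_div_eq {p : K[X]} {e A₁ A₂ A₃ α₁ α₂ α₃ : K} (hp : p ≠ 0)
    (h : 1 / algebraMap K[X] (RatFunc K) p =
      RatFunc.C e * (RatFunc.C A₁ / (RatFunc.X - RatFunc.C α₁) +
        RatFunc.C A₂ / (RatFunc.X - RatFunc.C α₂) + RatFunc.C A₃ / (RatFunc.X - RatFunc.C α₃))) :
    (X - C α₁) * (X - C α₂) * (X - C α₃) = p * (C e * (C A₁ * ((X - C α₂) * (X - C α₃)) +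
      C A₂ * ((X - C α₁) * (X - C α₃)) + C A₃ * ((X - C α₁) * (X - C α₂)))) := by
  have hX (α : K) : RatFunc.X - RatFunc.C α ≠ 0 := by
    rw [← RatFunc.algebraMap_X, ← RatFunc.algebraMap_C, ← map_sub]
    exact (map_ne_zero_iff _ (RatFunc.algebraMap_injective K)).mpr (X_sub_C_ne_zero α)
  have hp' : algebraMap K[X] (RatFunc K) p ≠ 0 :=
    (map_ne_zero_iff _ (RatFunc.algebraMap_injective K)).mpr hp
  apply RatFunc.algebraMap_injective K
  simp only [map_mul, map_sub, map_add, RatFunc.algebraMap_X, RatFunc.algebraMap_C]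
  field_simp [hX, hp'] at h
  linear_combination h

theorem Polynomial.eq_one_of_monic_of_eq_mul {R : Type*} [CommSemiring R] {p q r : R[X]}
    (hp : p.Monic) (hq : q.Monic) (hdeg : q.natDegree = p.natDegree) (h : q = p * r) : r = 1 := by
  have hr : r.Monic := hp.of_mul_monic_left (h ▸ hq)
  refine eq_one_of_monic_natDegree_zero hr ?_
  have := hp.natDegree_mul hr
  rw [← h] at this
  omega

theorem residue_relations_of_one_div_eq {a b c e A₁ A₂ A₃ α₁ α₂ α₃ : K}
    (h : 1 / (RatFunc.X ^ 3 + RatFunc.C a * RatFunc.X ^ 2 + RatFunc.C b * RatFunc.X + RatFunc.C c) =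
      RatFunc.C e * (RatFunc.C A₁ / (RatFunc.X - RatFunc.C α₁) +
        RatFunc.C A₂ / (RatFunc.X - RatFunc.C α₂) + RatFunc.C A₃ / (RatFunc.X - RatFunc.C α₃))) :
    A₁ + A₂ + A₃ = 0 ∧ A₁ * α₁ + A₂ * α₂ + A₃ * α₃ = 0 ∧
      α₁ + α₂ + α₃ = -a ∧ α₁ * α₂ + α₁ * α₃ + α₂ * α₃ = b ∧ α₁ * α₂ * α₃ = -c := by
  have hp : (X ^ 3 + C a * X ^ 2 + C b * X + C c : K[X]).Monic := by monicity!
  have hdeg : ((X - C α₁) * (X - C α₂) * (X - C α₃)).natDegree =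
      (X ^ 3 + C a * X ^ 2 + C b * X + C c : K[X]).natDegree := by
    have hD3 : ((X - C α₁) * (X - C α₂) * (X - C α₃)).natDegree = 3 := by compute_degree!
    have hp3 : (X ^ 3 + C a * X ^ 2 + C b * X + C c : K[X]).natDegree = 3 := by compute_degree!
    rw [hD3, hp3]
  have hfac := prod_X_sub_C_eq_mul_of_one_div_eq hp.ne_zero (by simpa using h)
  have hN := eq_one_of_monic_of_eq_mul hp (by monicity!) hdeg hfac
  rw [hN, mul_one] at hfac
  have hD : (X - C α₁) * (X - C α₂) * (X - C α₃) = X ^ 3 - C (α₁ + α₂ + α₃) * X ^ 2 +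
      C (α₁ * α₂ + α₁ * α₃ + α₂ * α₃) * X - C (α₁ * α₂ * α₃) := by
    simp only [map_add, map_mul]; ring
  have hN' : C e * (C A₁ * ((X - C α₂) * (X - C α₃)) + C A₂ * ((X - C α₁) * (X - C α₃)) +
      C A₃ * ((X - C α₁) * (X - C α₂))) = C (e * (A₁ + A₂ + A₃)) * X ^ 2 -
      C (e * (A₁ * (α₂ + α₃) + A₂ * (α₁ + α₃) + A₃ * (α₁ + α₂))) * X +
      C (e * (A₁ * (α₂ * α₃) + A₂ * (α₁ * α₃) + A₃ * (α₁ * α₂))) := by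
    simp only [map_add, map_mul]; ring
  rw [hD] at hfac
  rw [hN'] at hN
  have hD2 := congrArg (coeff · 2) hfac
  have hD1 := congrArg (coeff · 1) hfac
  have hD0 := congrArg (coeff · 0) hfac
  have hN2 := congrArg (coeff · 2) hN
  have hN1 := congrArg (coeff · 1) hN
  have hN0 := congrArg (coeff · 0) hN
  simp only [coeff_add, coeff_sub, coeff_C_mul, coeff_X_pow, coeff_X, coeff_C, coeff_one]
    at hD2 hD1 hD0 hN2 hN1 hN0
  norm_num at hD2 hD1 hD0 hN2 hN1 hN0
  have he : e ≠ 0 := left_ne_zero_of_mul_eq_one hN0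
  have hA := hN2.resolve_left he
  refine ⟨hA, ?_, by linear_combination -hD2, hD1, by linear_combination -hD0⟩
  linear_combination (α₁ + α₂ + α₃) * hA - hN1.resolve_left he

end PartialFractions

section LineMeetsSphere

open Matrix

theorem cross_dot_cross_smul_eq_of_dotProduct_eq_zero {R : Type*} [CommRing R]
    {u v d : Fin 3 → R} (hu : u ⬝ᵥ d = 0) (hv : v ⬝ᵥ d = 0) :
    (u ⨯₃ v ⬝ᵥ u ⨯₃ v) • d = (d ⬝ᵥ u ⨯₃ v) • u ⨯₃ v := by
  have h : u ⨯₃ v ⨯₃ d = 0 := by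
    rw [cross_cross_eq_smul_sub_smul, hu, hv, zero_smul, zero_smul, sub_zero]
  rw [← sub_eq_zero, ← cross_cross_eq_smul_sub_smul', ← cross_anticomm (u ⨯₃ v) d, h, neg_zero,
    map_zero]

variable {F : Type*} [Field F]

theorem finite_setOf_dotProduct_eq {u v : Fin 3 → F} (huv : u ⨯₃ v ⬝ᵥ u ⨯₃ v ≠ 0) (r s q : F) :
    {x : Fin 3 → F | u ⬝ᵥ x = r ∧ v ⬝ᵥ x = s ∧ x ⬝ᵥ x = q}.Finite := by
  set w := u ⨯₃ v
  rcases Set.eq_empty_or_nonempty {x : Fin 3 → F | u ⬝ᵥ x = r ∧ v ⬝ᵥ x = s ∧ x ⬝ᵥ x = q} with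
    hempty | ⟨x₀, hu₀, hv₀, hq₀⟩
  · rw [hempty]; exact Set.finite_empty
  refine ((Set.toFinite {0, -2 * (x₀ ⬝ᵥ w) / (w ⬝ᵥ w)}).image fun t => x₀ + t • w).subset ?_
  rintro x ⟨hu, hv, hq⟩
  have hd : (w ⬝ᵥ w) • (x - x₀) = ((x - x₀) ⬝ᵥ w) • w :=
    cross_dot_cross_smul_eq_of_dotProduct_eq_zero (by rw [dotProduct_sub, hu, hu₀, sub_self])
      (by rw [dotProduct_sub, hv, hv₀, sub_self])
  have hx : x = x₀ + ((x - x₀) ⬝ᵥ w / (w ⬝ᵥ w)) • w := by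
    rw [div_eq_inv_mul, mul_smul, ← hd, smul_smul, inv_mul_cancel₀ huv, one_smul, add_sub_cancel]
  set t := (x - x₀) ⬝ᵥ w / (w ⬝ᵥ w)
  refine ⟨t, ?_, hx.symm⟩
  rw [hx, ← hq₀] at hq
  simp only [dotProduct_add, add_dotProduct, dotProduct_smul, smul_dotProduct, smul_eq_mul,
    dotProduct_comm w x₀] at hq
  have ht : t * (2 * (x₀ ⬝ᵥ w) + t * (w ⬝ᵥ w)) = 0 := by linear_combination hq
  rcases mul_eq_zero.mp ht with h0 | h0
  · exact Or.inl h0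
  · exact Or.inr (by rw [Set.mem_singleton_iff, eq_div_iff huv]; linear_combination h0)

theorem dotProduct_self_mul_dotProduct_self_eq_of_infinite {u v : Fin 3 → F} {r s q : F}
    (h : {x : Fin 3 → F | u ⬝ᵥ x = r ∧ v ⬝ᵥ x = s ∧ x ⬝ᵥ x = q}.Infinite) :
    u ⬝ᵥ u * (v ⬝ᵥ v) = (u ⬝ᵥ v) ^ 2 := by
  by_contra hne
  refine h (finite_setOf_dotProduct_eq ?_ r s q)
  rwa [cross_dot_cross, dotProduct_comm v u, ← sq, sub_ne_zero]

end LineMeetsSphere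

open RatFunc in
theorem residue_ratios_cube_roots_general
    (a b : ℂ) (A₁ A₂ A₃ : ℂ)
    (hinf : {c : ℂ | ∃ (e : ℂ) (α₁ α₂ α₃ : ℂ), α₁ ≠ α₂ ∧ α₁ ≠ α₃ ∧ α₂ ≠ α₃ ∧
      1 / (X ^ 3 + C a * X ^ 2 + C b * X + C c) =
        C e * (C A₁ / (X - C α₁) + C A₂ / (X - C α₂) + C A₃ / (X - C α₃))}.Infinite) :
    A₁ + A₂ + A₃ = 0 ∧ A₁ * A₂ + A₁ * A₃ + A₂ * A₃ = 0 := by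
  obtain ⟨_, _, _, _, _, -, -, -, h⟩ := hinf.nonempty
  have hA : A₁ + A₂ + A₃ = 0 := (residue_relations_of_one_div_eq h).1
  have hroots : {x : Fin 3 → ℂ | ![A₁, A₂, A₃] ⬝ᵥ x = 0 ∧ ![1, 1, 1] ⬝ᵥ x = -a ∧
      x ⬝ᵥ x = a ^ 2 - 2 * b}.Infinite := by
    refine fun hfin => hinf ((hfin.image fun x => -(x 0 * x 1 * x 2)).subset ?_)
    rintro c ⟨e, α₁, α₂, α₃, -, -, -, h⟩
    obtain ⟨-, hAα, h₁, h₂, h₃⟩ := residue_relations_of_one_div_eq h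
    refine ⟨![α₁, α₂, α₃], ?_, show -(α₁ * α₂ * α₃) = c by linear_combination -h₃⟩
    simp only [Set.mem_ofPred_eq, Matrix.vec3_dotProduct']
    exact ⟨hAα, by linear_combination h₁, by linear_combination (α₁ + α₂ + α₃ - a) * h₁ - 2 * h₂⟩
  have hgram := dotProduct_self_mul_dotProduct_self_eq_of_infinite hroots
  simp only [Matrix.vec3_dotProduct'] at hgram
  exact ⟨hA, by linear_combination (A₁ + A₂ + A₃) / 3 * hA - hgram / 6⟩

open RatFunc in
/-- Let `P(z) = z³ + az² + bz` and `A₁, A₂, A₃ ∈ ℂ*` with `A₁A₂A₃ = 1`.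
If for infinitely many `c ∈ ℂ` one can write
`1/(P(z)+c) = e·(A₁/(z-α₁) + A₂/(z-α₂) + A₃/(z-α₃))` with the `αᵢ` pairwise distinct,
then `A₁ + A₂ + A₃ = 0` and `A₁A₂ + A₁A₃ + A₂A₃ = 0`, i.e. `{A₁, A₂, A₃}` is the set of
cube roots of unity. -/
theorem residue_ratios_cube_roots
    (a b : ℂ) (A₁ A₂ A₃ : ℂ) (hA₁ : A₁ ≠ 0) (hA₂ : A₂ ≠ 0) (hA₃ : A₃ ≠ 0)
    (hprod : A₁ * A₂ * A₃ = 1)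
    (hinf : {c : ℂ | ∃ (e : ℂ) (α₁ α₂ α₃ : ℂ), α₁ ≠ α₂ ∧ α₁ ≠ α₃ ∧ α₂ ≠ α₃ ∧
      1 / (X ^ 3 + C a * X ^ 2 + C b * X + C c) =
        C e * (C A₁ / (X - C α₁) + C A₂ / (X - C α₂) + C A₃ / (X - C α₃))}.Infinite) :
    A₁ + A₂ + A₃ = 0 ∧ A₁ * A₂ + A₁ * A₃ + A₂ * A₃ = 0 :=
  residue_ratios_cube_roots_general a b A₁ A₂ A₃ hinf
end
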